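/- arXiv:1705.09167 — 8 statements merged into one kernel-verified Lean document; each statement's English description precedes it below -/
import Mathlib

section
/- Every finite poset with boolean dimension at most 2 has dimension at most 2; consequently, boolean dimension 2 and dimension 2 are equivalent. -/
/-- `L` is a realizer of the order `le`: a family of linear extensions of `le`
whose intersection is `le`. -/
def IsRealizer {X : Type*} (le : X → X → Prop) {d : ℕ} (L : Fin d → X → X → Prop) : Prop :=
  (∀ i, IsLinearOrder X (L i)) ∧ (∀ (i) (x y : X), le x y → L i x y) ∧
    (∀ x y : X, le x y ↔ ∀ i, L i x y)

/-- The (Dushnik–Miller) dimension of a poset: the least size of a realizer. -/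
noncomputable def orderDim (X : Type*) [PartialOrder X] : ℕ :=
  sInf {d : ℕ | ∃ L : Fin d → X → X → Prop, IsRealizer (· ≤ ·) L}

/-- `L` together with the boolean function `φ` is a boolean realizer of `le`. -/
def IsBooleanRealizer {X : Type*} (le : X → X → Prop) {d : ℕ}
    (L : Fin d → X → X → Prop) (φ : (Fin d → Prop) → Prop) : Prop :=
  (∀ i, IsLinearOrder X (L i)) ∧ ∀ x y : X, le x y ↔ φ (fun i => L i x y)

/-- Boolean dimension of a relation. -/
noncomputable def booleanDimRel {X : Type*} (le : X → X → Prop) : ℕ :=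
  sInf {d : ℕ | ∃ (L : Fin d → X → X → Prop) (φ : (Fin d → Prop) → Prop),
    IsBooleanRealizer le L φ}

/-- Boolean dimension of a poset. -/
noncomputable def booleanDim (X : Type*) [PartialOrder X] : ℕ :=
  booleanDimRel ((· ≤ ·) : X → X → Prop)

/-- A partial linear extension of `le`: a linear order on a subset of `X`
extending the restriction of `le` to that subset. -/
structure PLE {X : Type*} (le : X → X → Prop) where
  dom : Set X
  rel : X → X → Prop
  mem_left : ∀ x y, rel x y → x ∈ dom
  mem_right : ∀ x y, rel x y → y ∈ dom
  refl : ∀ x ∈ dom, rel x x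
  antisymm : ∀ x y, rel x y → rel y x → x = y
  trans : ∀ x y z, rel x y → rel y z → rel x z
  total : ∀ x ∈ dom, ∀ y ∈ dom, rel x y ∨ rel y x
  le_imp : ∀ x ∈ dom, ∀ y ∈ dom, le x y → rel x y

/-- A family of partial linear extensions is a local realizer of `le`:
`x ≤ y` iff no member reverses the pair strictly. -/
def IsLocalRealizer {X : Type*} {le : X → X → Prop} {ι : Type*} (L : ι → PLE le) : Prop :=
  ∀ x y : X, le x y ↔ ∀ i, ¬ ((L i).rel y x ∧ y ≠ x)

/-- Every element of `X` occurs in the domain of at most `d` members of the family. -/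
def WidthAtMost {X : Type*} {le : X → X → Prop} {ι : Type*} (L : ι → PLE le) (d : ℕ) : Prop :=
  ∀ x : X, ({i : ι | x ∈ (L i).dom}).ncard ≤ d

/-- Local dimension of a poset: the least width of a local realizer. -/
noncomputable def localDim (X : Type*) [PartialOrder X] : ℕ :=
  sInf {d : ℕ | ∃ (t : ℕ) (L : Fin t → PLE ((· ≤ ·) : X → X → Prop)),
    IsLocalRealizer L ∧ WidthAtMost L d}

/-!
For distinct `x, y` and linear orders `A, B`, the truth values of `(A y x, B y x)` are the
negations of those of `(A x y, B x y)`. Reflexivity forces `φ True True`, and antisymmetry of `≤`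
then pins the poset down: if `φ True False` holds, every pair ordered by `A` is comparable in `≤`
in the same direction, so `≤` is `A`; symmetrically for `φ False True`; otherwise `φ` accepts
only `(True, True)` among the values realized by distinct pairs, so `≤` is `A ∩ B`.
-/

section

variable {X : Type*}

theorem isRealizer_of_forall {le : X → X → Prop} {d : ℕ} {L : Fin d → X → X → Prop}
    (hL : ∀ i, IsLinearOrder X (L i)) (h : ∀ x y, le x y ↔ ∀ i, L i x y) : IsRealizer le L :=
  ⟨hL, fun i x y hxy => (h x y).1 hxy i, h⟩

theorem isRealizer_pair {le A B : X → X → Prop} [IsLinearOrder X A] [IsLinearOrder X B]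
    (h : ∀ x y, le x y ↔ A x y ∧ B x y) : IsRealizer le ![A, B] :=
  isRealizer_of_forall (fun i => by fin_cases i <;> assumption)
    fun x y => by simpa [Fin.forall_fin_two] using h x y

theorem IsRealizer.isBooleanRealizer {le : X → X → Prop} {d : ℕ} {L : Fin d → X → X → Prop}
    (h : IsRealizer le L) : IsBooleanRealizer le L (fun v => ∀ i, v i) :=
  ⟨h.1, h.2.2⟩

variable [PartialOrder X]

section TwoLinearOrders

variable {A B : X → X → Prop} [IsLinearOrder X A] [IsLinearOrder X B]
  {φ : Prop → Prop → Prop}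

theorem boolean_true_true (h : ∀ x y, x ≤ y ↔ φ (A x y) (B x y)) (x : X) : φ True True := by
  simpa [refl_of A x, refl_of B x] using (h x x).1 le_rfl

theorem le_iff_left_of_boolean (h : ∀ x y, x ≤ y ↔ φ (A x y) (B x y)) (hTF : φ True False)
    (x y : X) : x ≤ y ↔ A x y := by
  have le_of_A : ∀ x y, A x y → x ≤ y := by
    intro x y hA
    refine (h x y).2 ?_
    by_cases hB : B x y
    · simpa [hA, hB] using boolean_true_true h x
    · simpa [hA, hB] using hTF
  refine ⟨fun hle => ?_, le_of_A x y⟩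
  by_contra hA
  have hyx : y ≤ x := le_of_A y x ((total_of A x y).resolve_left hA)
  exact hA (le_antisymm hle hyx ▸ refl_of A x)

theorem le_iff_and_of_boolean (h : ∀ x y, x ≤ y ↔ φ (A x y) (B x y)) (hTF : ¬φ True False)
    (hFT : ¬φ False True) (x y : X) : x ≤ y ↔ A x y ∧ B x y := by
  have le_of_A_B : ∀ x y, A x y → B x y → x ≤ y := fun x y hA hB =>
    (h x y).2 (by simpa [hA, hB] using boolean_true_true h x)
  refine ⟨fun hle => ?_, fun ⟨hA, hB⟩ => le_of_A_B x y hA hB⟩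
  have hφ := (h x y).1 hle
  by_cases hA : A x y <;> by_cases hB : B x y
  · exact ⟨hA, hB⟩
  · exact absurd (by simpa [hA, hB] using hφ) hTF
  · exact absurd (by simpa [hA, hB] using hφ) hFT
  · have hyx := le_of_A_B y x ((total_of A x y).resolve_left hA) ((total_of B x y).resolve_left hB)
    exact absurd (le_antisymm hle hyx ▸ refl_of A x) hA

theorem le_iff_of_boolean (h : ∀ x y, x ≤ y ↔ φ (A x y) (B x y)) :
    (∀ x y, x ≤ y ↔ A x y) ∨ (∀ x y, x ≤ y ↔ B x y) ∨ (∀ x y, x ≤ y ↔ A x y ∧ B x y) := by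
  by_cases hTF : φ True False
  · exact .inl (le_iff_left_of_boolean h hTF)
  by_cases hFT : φ False True
  · exact .inr (.inl (le_iff_left_of_boolean (φ := fun a b => φ b a) (fun x y => h x y) hFT))
  · exact .inr (.inr (le_iff_and_of_boolean h hTF hFT))

end TwoLinearOrders

theorem exists_isRealizer_of_isBooleanRealizer_zero {L : Fin 0 → X → X → Prop}
    {φ : (Fin 0 → Prop) → Prop} (hL : IsBooleanRealizer (· ≤ ·) L φ) :
    ∃ M : Fin 0 → X → X → Prop, IsRealizer (· ≤ ·) M := by
  have hle (x y : X) : x ≤ y := by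
    have hxx : φ (fun i => L i x x) := (hL.2 x x).1 le_rfl
    exact (hL.2 x y).2 (Subsingleton.elim (fun i => L i x x) (fun i => L i x y) ▸ hxx)
  exact ⟨L, isRealizer_of_forall hL.1 fun x y => iff_of_true (hle x y) finZeroElim⟩

theorem exists_isRealizer_of_isBooleanRealizer_one {L : Fin 1 → X → X → Prop}
    {φ : (Fin 1 → Prop) → Prop} (hL : IsBooleanRealizer (· ≤ ·) L φ) :
    ∃ M : Fin 1 → X → X → Prop, IsRealizer (· ≤ ·) M := by
  have := hL.1 0
  have hφ (x y : X) : x ≤ y ↔ φ ![L 0 x y] :=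
    (hL.2 x y).trans (iff_of_eq (congrArg φ (funext fun i => by fin_cases i; rfl)))
  have h : ∀ x y : X, x ≤ y ↔ L 0 x y := by
    rcases le_iff_of_boolean (A := L 0) (B := L 0) (φ := fun a _ => φ ![a]) hφ with h | h | h <;>
      simpa using h
  exact ⟨L, isRealizer_of_forall hL.1 fun x y => by simpa [Fin.forall_fin_one] using h x y⟩

theorem exists_isRealizer_of_isBooleanRealizer_two {L : Fin 2 → X → X → Prop}
    {φ : (Fin 2 → Prop) → Prop} (hL : IsBooleanRealizer (· ≤ ·) L φ) :
    ∃ M : Fin 2 → X → X → Prop, IsRealizer (· ≤ ·) M := by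
  have := hL.1 0
  have := hL.1 1
  have hφ (x y : X) : x ≤ y ↔ φ ![L 0 x y, L 1 x y] :=
    (hL.2 x y).trans (iff_of_eq (congrArg φ (funext fun i => by fin_cases i <;> rfl)))
  rcases le_iff_of_boolean (A := L 0) (B := L 1) (φ := fun a b => φ ![a, b]) hφ with h | h | h
  · exact ⟨_, isRealizer_pair (A := L 0) (B := L 0) fun x y => (h x y).trans and_self_iff.symm⟩
  · exact ⟨_, isRealizer_pair (A := L 1) (B := L 1) fun x y => (h x y).trans and_self_iff.symm⟩
  · exact ⟨_, isRealizer_pair (A := L 0) (B := L 1) h⟩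

theorem exists_isRealizer_of_isBooleanRealizer {d : ℕ} (hd : d ≤ 2) {L : Fin d → X → X → Prop}
    {φ : (Fin d → Prop) → Prop} (hL : IsBooleanRealizer (· ≤ ·) L φ) :
    ∃ M : Fin d → X → X → Prop, IsRealizer (· ≤ ·) M := by
  interval_cases d
  · exact exists_isRealizer_of_isBooleanRealizer_zero hL
  · exact exists_isRealizer_of_isBooleanRealizer_one hL
  · exact exists_isRealizer_of_isBooleanRealizer_two hL

theorem orderDim_le_of_isRealizer {d : ℕ} {L : Fin d → X → X → Prop}
    (hL : IsRealizer (· ≤ ·) L) : orderDim X ≤ d :=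
  Nat.sInf_le ⟨L, hL⟩

theorem booleanDim_le_of_isRealizer {d : ℕ} {L : Fin d → X → X → Prop}
    (hL : IsRealizer (· ≤ ·) L) : booleanDim X ≤ d :=
  Nat.sInf_le ⟨L, _, hL.isBooleanRealizer⟩

theorem booleanDim_le_orderDim_of_isRealizer {d : ℕ} {L : Fin d → X → X → Prop}
    (hL : IsRealizer (· ≤ ·) L) : booleanDim X ≤ orderDim X := by
  obtain ⟨M, hM⟩ : ∃ M : Fin (orderDim X) → X → X → Prop, IsRealizer (· ≤ ·) M :=
    Nat.sInf_mem (s := {d | ∃ L : Fin d → X → X → Prop, IsRealizer (· ≤ ·) L}) ⟨d, L, hL⟩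
  exact booleanDim_le_of_isRealizer hM

theorem booleanDim_le_orderDim (h : orderDim X ≠ 0) : booleanDim X ≤ orderDim X := by
  obtain ⟨d, L, hL⟩ : ∃ d, ∃ L : Fin d → X → X → Prop, IsRealizer (· ≤ ·) L :=
    Nat.nonempty_of_pos_sInf (Nat.pos_of_ne_zero h)
  exact booleanDim_le_orderDim_of_isRealizer hL

theorem orderDim_eq_booleanDim (h : booleanDim X ≤ 2) : orderDim X = booleanDim X := by
  by_cases hne : {d | ∃ (L : Fin d → X → X → Prop) (φ : (Fin d → Prop) → Prop),
      IsBooleanRealizer (· ≤ ·) L φ}.Nonempty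
  · obtain ⟨L, φ, hL⟩ := Nat.sInf_mem hne
    obtain ⟨M, hM⟩ := exists_isRealizer_of_isBooleanRealizer h hL
    exact le_antisymm (orderDim_le_of_isRealizer hM) (booleanDim_le_orderDim_of_isRealizer hM)
  · have hb : booleanDim X = 0 := by
      unfold booleanDim booleanDimRel
      rw [Set.not_nonempty_iff_eq_empty.mp hne, Nat.sInf_empty]
    refine hb ▸ Nat.sInf_eq_zero.2 (.inr (Set.eq_empty_of_forall_notMem ?_))
    rintro d ⟨L, hL⟩
    exact hne ⟨d, L, _, hL.isBooleanRealizer⟩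

end

theorem boolean_dim_two_iff_dim_two_general (X : Type*) [PartialOrder X] :
    (booleanDim X ≤ 2 → orderDim X ≤ 2) ∧ (booleanDim X = 2 ↔ orderDim X = 2) := by
  refine ⟨fun h => (orderDim_eq_booleanDim h).le.trans h,
    fun h => (orderDim_eq_booleanDim h.le).trans h, fun h => ?_⟩
  have hle : booleanDim X ≤ 2 := h ▸ booleanDim_le_orderDim (by omega)
  rw [← orderDim_eq_booleanDim hle, h]

/-- Every finite poset with boolean dimension at most 2 has dimension
at most 2; consequently, boolean dimension 2 and dimension 2 are equivalent. -/
theorem boolean_dim_two_iff_dim_two (X : Type*) [PartialOrder X] [Fintype X] :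
    (booleanDim X ≤ 2 → orderDim X ≤ 2) ∧ (booleanDim X = 2 ↔ orderDim X = 2) :=
  boolean_dim_two_iff_dim_two_general X
end

section
/- Every finite poset with boolean dimension at most 3 has dimension at most 3; consequently, boolean dimension 3 and dimension 3 are equivalent. -/
namespace BD3

/-! ### Combinatorial core: patterns in `Bool × Bool × Bool` -/

abbrev V3 := Bool × Bool × Bool

def inv3 (v : V3) : V3 := (!v.1, !v.2.1, !v.2.2)

def allV3 : List V3 :=
  [(false,false,false),(false,false,true),(false,true,false),(false,true,true),
   (true,false,false),(true,false,true),(true,true,false),(true,true,true)]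

theorem mem_allV3 (v : V3) : v ∈ allV3 := by
  rcases v with ⟨a, b, c⟩; cases a <;> cases b <;> cases c <;> simp [allV3]

theorem all_spec {f : V3 → Bool} (h : allV3.all f = true) (v : V3) : f v = true :=
  List.all_eq_true.mp h v (mem_allV3 v)

theorem inv3_inv3 (v : V3) : inv3 (inv3 v) = v := by
  rcases v with ⟨a, b, c⟩; simp [inv3]

def consB (a b c : Bool) : Bool := (!(a && b) || c) && (!(!a && !b) || !c)

def consis (p q r : V3) : Bool :=
  consB p.1 q.1 r.1 && consB p.2.1 q.2.1 r.2.1 && consB p.2.2 q.2.2 r.2.2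

def letr (T : V3 → Bool) (p q r : V3) : Bool :=
  (!(T p && T q) || T r) && (!(T r && T (inv3 q)) || T p) && (!(T (inv3 p) && T r) || T q) &&
  (!(T q && T (inv3 r)) || T (inv3 p)) && (!(T (inv3 r) && T p) || T (inv3 q)) &&
  (!(T (inv3 q) && T (inv3 p)) || T (inv3 r))

def nlt (T W : V3 → Bool) (v : V3) : Bool := T v || (!T (inv3 v) && W v)

def good (T W : V3 → Bool) : Bool :=
  allV3.all fun p => allV3.all fun q => allV3.all fun r =>
    !(consis p q r && letr T p q r && nlt T W p && nlt T W q) || nlt T W r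

def covers (T W1 W2 W3 : V3 → Bool) : Bool :=
  allV3.all fun v => T v || T (inv3 v) || !(nlt T W1 v && nlt T W2 v && nlt T W3 v)

def ok (T W1 W2 W3 : V3 → Bool) : Bool :=
  good T W1 && good T W2 && good T W3 && covers T W1 W2 W3

def c1p : V3 → Bool := fun v => v.1
def c1m : V3 → Bool := fun v => !v.1
def c2p : V3 → Bool := fun v => v.2.1
def c2m : V3 → Bool := fun v => !v.2.1
def c3p : V3 → Bool := fun v => v.2.2
def c3m : V3 → Bool := fun v => !v.2.2

def TT (a b c d e f : Bool) : V3 → Bool := fun v =>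
  match v with
  | (true, true, true) => true
  | (false, false, false) => false
  | (true, true, false) => a
  | (false, false, true) => b
  | (true, false, true) => c
  | (false, true, false) => d
  | (false, true, true) => e
  | (true, false, false) => f

set_option maxRecDepth 10000 in
theorem master : ∀ a b c d e f : Bool, (a && b) = false → (c && d) = false → (e && f) = false →
    (ok (TT a b c d e f) c1m c1p c1p || ok (TT a b c d e f) c2m c2p c2p ||
     ok (TT a b c d e f) c3m c3p c3p || ok (TT a b c d e f) c1p c2p c3p) = true := by decide

theorem impB {a b c : Bool} (h : a = true → b = true → c = true) : (!(a && b) || c) = true := by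
  cases a <;> cases b <;> simp_all

theorem consB_true {a b c : Bool} (h1 : a = true → b = true → c = true)
    (h2 : a = false → b = false → c = false) : consB a b c = true := by
  cases a <;> cases b <;> cases c <;> simp_all [consB]

theorem nlt_asym {T W : V3 → Bool} (hcf : ∀ v, ¬(T v = true ∧ T (inv3 v) = true))
    (hW : ∀ v, W (inv3 v) = !W v) {v : V3}
    (h1 : nlt T W v = true) (h2 : nlt T W (inv3 v) = true) : False := by
  unfold nlt at h1 h2
  rw [inv3_inv3] at h2
  rcases Bool.or_eq_true_iff.mp h1 with hT | hx
  · rcases Bool.or_eq_true_iff.mp h2 with hT' | hx'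
    · exact hcf v ⟨hT, hT'⟩
    · simp [hT] at hx'
  · rcases Bool.or_eq_true_iff.mp h2 with hT' | hx'
    · simp [hT'] at hx
    · rw [Bool.and_eq_true] at hx hx'
      rw [hW v] at hx'
      simp [hx.2] at hx'

theorem nlt_total {T W : V3 → Bool} (hW : ∀ v, W (inv3 v) = !W v) (v : V3) :
    nlt T W v = true ∨ nlt T W (inv3 v) = true := by
  unfold nlt
  rw [inv3_inv3, hW v]
  cases hT : T v <;> cases hT' : T (inv3 v) <;> cases hw : W v <;> simp

/-! ### From a good tie-break triple to a realizer -/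

theorem build {X : Type*} [PartialOrder X]
    (pat : X → X → V3) (T : V3 → Bool) (W1 W2 W3 : V3 → Bool)
    (hpatinv : ∀ x y : X, x ≠ y → pat y x = inv3 (pat x y))
    (hcons : ∀ x y z : X, x ≠ y → y ≠ z → x ≠ z →
      consis (pat x y) (pat y z) (pat x z) = true)
    (hkey : ∀ x y : X, x ≠ y → (x ≤ y ↔ T (pat x y) = true))
    (hcf : ∀ v, ¬(T v = true ∧ T (inv3 v) = true))
    (hW1 : ∀ v, W1 (inv3 v) = !W1 v) (hW2 : ∀ v, W2 (inv3 v) = !W2 v)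
    (hW3 : ∀ v, W3 (inv3 v) = !W3 v)
    (hg1 : good T W1 = true) (hg2 : good T W2 = true) (hg3 : good T W3 = true)
    (hcov : covers T W1 W2 W3 = true) :
    ∃ M : Fin 3 → X → X → Prop, IsRealizer (· ≤ ·) M := by
  classical
  set Wf : Fin 3 → V3 → Bool := ![W1, W2, W3] with hWf
  have hWa : ∀ j v, Wf j (inv3 v) = !Wf j v := by
    intro j; fin_cases j <;> [exact hW1; exact hW2; exact hW3]
  have hga : ∀ j, good T (Wf j) = true := by
    intro j; fin_cases j <;> [exact hg1; exact hg2; exact hg3]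
  have hletr : ∀ x y z : X, x ≠ y → y ≠ z → x ≠ z →
      letr T (pat x y) (pat y z) (pat x z) = true := by
    intro x y z hxy hyz hxz
    have kxy := hkey x y hxy
    have kyz := hkey y z hyz
    have kxz := hkey x z hxz
    have kyx := (hkey y x hxy.symm); rw [hpatinv x y hxy] at kyx
    have kzy := (hkey z y hyz.symm); rw [hpatinv y z hyz] at kzy
    have kzx := (hkey z x hxz.symm); rw [hpatinv x z hxz] at kzx
    unfold letr
    repeat rw [Bool.and_eq_true]
    refine ⟨⟨⟨⟨⟨?_, ?_⟩, ?_⟩, ?_⟩, ?_⟩, ?_⟩ <;> apply impB <;> intro h1 h2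
    · exact kxz.mp (le_trans (kxy.mpr h1) (kyz.mpr h2))
    · exact kxy.mp (le_trans (kxz.mpr h1) (kzy.mpr h2))
    · exact kyz.mp (le_trans (kyx.mpr h1) (kxz.mpr h2))
    · exact kyx.mp (le_trans (kyz.mpr h1) (kzx.mpr h2))
    · exact kzy.mp (le_trans (kzx.mpr h1) (kxy.mpr h2))
    · exact kzx.mp (le_trans (kzy.mpr h1) (kyx.mpr h2))
  set M : Fin 3 → X → X → Prop :=
    fun j x y => x = y ∨ (x ≠ y ∧ nlt T (Wf j) (pat x y) = true) with hM
  have hMstrict : ∀ j (x y : X), x ≠ y → (M j x y ↔ nlt T (Wf j) (pat x y) = true) := by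
    intro j x y hne
    constructor
    · rintro (h | h); exact absurd h hne; exact h.2
    · intro h; exact Or.inr ⟨hne, h⟩
  have hext : ∀ j (x y : X), x ≤ y → M j x y := by
    intro j x y hxy
    by_cases hne : x = y
    · exact Or.inl hne
    · refine Or.inr ⟨hne, ?_⟩
      unfold nlt
      rw [(hkey x y hne).mp hxy]
      simp
  have hlin : ∀ j, IsLinearOrder X (M j) := by
    intro j
    refine { refl := fun x => Or.inl rfl, trans := ?_, antisymm := ?_, total := ?_ }
    · rintro x y z (rfl | ⟨hxy, h1⟩) h2
      · exact h2
      rcases h2 with rfl | ⟨hyz, h2⟩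
      · exact Or.inr ⟨hxy, h1⟩
      by_cases hxz : x = z
      · subst hxz
        rw [hpatinv x y hxy] at h2
        exact (nlt_asym hcf (hWa j) h1 h2).elim
      refine Or.inr ⟨hxz, ?_⟩
      have hgj := all_spec (all_spec (all_spec (hga j) (pat x y)) (pat y z)) (pat x z)
      rw [hcons x y z hxy hyz hxz, hletr x y z hxy hyz hxz, h1, h2] at hgj
      simpa using hgj
    · rintro x y (rfl | ⟨hxy, h1⟩) h2
      · rfl
      rcases h2 with h | ⟨hyx, h2⟩
      · exact h.symm
      rw [hpatinv x y hxy] at h2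
      exact (nlt_asym hcf (hWa j) h1 h2).elim
    · intro x y
      by_cases hne : x = y
      · exact Or.inl (Or.inl hne)
      rcases nlt_total (T := T) (hWa j) (pat x y) with h | h
      · exact Or.inl (Or.inr ⟨hne, h⟩)
      · rw [← hpatinv x y hne] at h
        exact Or.inr (Or.inr ⟨Ne.symm hne, h⟩)
  refine ⟨M, hlin, hext, fun x y => ⟨fun h j => hext j x y h, fun h => ?_⟩⟩
  by_cases hne : x = y
  · exact le_of_eq hne
  have hn : ∀ j, nlt T (Wf j) (pat x y) = true :=
    fun j => (hMstrict j x y hne).mp (h j)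
  by_cases hT : T (pat x y) = true
  · exact (hkey x y hne).mpr hT
  exfalso
  have hcv := all_spec hcov (pat x y)
  have hTf : T (pat x y) = false := by simpa using hT
  have hx : ∀ j, (!T (inv3 (pat x y)) && Wf j (pat x y)) = true := by
    intro j
    have := hn j
    unfold nlt at this
    rw [hTf] at this
    simpa using this
  have h0 := hx 0; have h1 := hx 1; have h2 := hx 2
  rw [Bool.and_eq_true] at h0 h1 h2
  have hW0 : Wf 0 (pat x y) = W1 (pat x y) := by simp [hWf]
  have hW1' : Wf 1 (pat x y) = W2 (pat x y) := by simp [hWf]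
  have hW2' : Wf 2 (pat x y) = W3 (pat x y) := by simp [hWf]
  rw [hW0] at h0; rw [hW1'] at h1; rw [hW2'] at h2
  have hTi : T (inv3 (pat x y)) = false := by
    have := h0.1; simpa using this
  have e1 : nlt T W1 (pat x y) = true := by unfold nlt; rw [hTf, hTi, h0.2]; rfl
  have e2 : nlt T W2 (pat x y) = true := by unfold nlt; rw [hTf, hTi, h1.2]; rfl
  have e3 : nlt T W3 (pat x y) = true := by unfold nlt; rw [hTf, hTi, h2.2]; rfl
  rw [hTf, hTi, e1, e2, e3] at hcv
  simp at hcv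


/-! ### Extracting the pattern structure from a boolean realizer of size 3 -/

theorem realize3 {X : Type*} [PartialOrder X] [Nonempty X]
    (L : Fin 3 → X → X → Prop) (φ : (Fin 3 → Prop) → Prop)
    (hB : IsBooleanRealizer (· ≤ ·) L φ) :
    ∃ M : Fin 3 → X → X → Prop, IsRealizer (· ≤ ·) M := by
  classical
  obtain ⟨hlin, hphi⟩ := hB
  set vf : V3 → Fin 3 → Bool := fun v i => if i.1 = 0 then v.1 else if i.1 = 1 then v.2.1 else v.2.2
    with hvf
  set pat : X → X → V3 := fun x y => (decide (L 0 x y), decide (L 1 x y), decide (L 2 x y))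
    with hpat
  have patvf : ∀ (x y : X) (i : Fin 3), (vf (pat x y) i = true) ↔ L i x y := by
    intro x y i
    fin_cases i <;> simp [hvf, hpat]
  set Sb : V3 → Bool := fun v => decide (φ (fun i => vf v i = true)) with hSb
  have key : ∀ x y : X, x ≤ y ↔ Sb (pat x y) = true := by
    intro x y
    have h1 := hphi x y
    have harg : (fun i => L i x y) = (fun i => vf (pat x y) i = true) := by
      funext i; exact propext (patvf x y i).symm
    rw [harg] at h1
    exact h1.trans decide_eq_true_iff.symm
  have patxx : ∀ x : X, pat x x = (true, true, true) := by
    intro x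
    have h0 : L 0 x x := by haveI := hlin 0; exact refl_of (L 0) x
    have h1 : L 1 x x := by haveI := hlin 1; exact refl_of (L 1) x
    have h2 : L 2 x x := by haveI := hlin 2; exact refl_of (L 2) x
    show (decide (L 0 x x), decide (L 1 x x), decide (L 2 x x)) = (true, true, true)
    rw [decide_eq_true h0, decide_eq_true h1, decide_eq_true h2]
  have Sb111 : Sb (true, true, true) = true := by
    obtain ⟨x0⟩ := ‹Nonempty X›
    have := (key x0 x0).mp le_rfl
    rwa [patxx x0] at this
  have patinv : ∀ x y : X, x ≠ y → pat y x = inv3 (pat x y) := by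
    intro x y hne
    have flip : ∀ i : Fin 3, decide (L i y x) = !decide (L i x y) := by
      intro i
      haveI := hlin i
      by_cases h : L i x y
      · have h' : ¬ L i y x := fun h2 => hne (antisymm_of (L i) h h2)
        rw [decide_eq_true h, decide_eq_false h']
        rfl
      · have h' : L i y x := (total_of (L i) x y).resolve_left h
        rw [decide_eq_true h', decide_eq_false h]
        rfl
    show (decide (L 0 y x), decide (L 1 y x), decide (L 2 y x)) =
      inv3 (decide (L 0 x y), decide (L 1 x y), decide (L 2 x y))
    rw [flip 0, flip 1, flip 2]
    rfl
  set T0 : V3 → Bool := fun v => (Sb v && !Sb (inv3 v)) || decide (v = (true, true, true))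
    with hT0
  have keyT : ∀ x y : X, x ≠ y → (x ≤ y ↔ T0 (pat x y) = true) := by
    intro x y hne
    constructor
    · intro hxy
      have h1 : Sb (pat x y) = true := (key x y).mp hxy
      have h2 : ¬ y ≤ x := fun h => hne (le_antisymm hxy h)
      have h3 : Sb (pat y x) = false := by
        rcases Bool.eq_false_or_eq_true (Sb (pat y x)) with h | h
        · exact absurd ((key y x).mpr h) h2
        · exact h
      rw [patinv x y hne] at h3
      simp only [hT0]
      rw [h1, h3]
      rfl
    · intro hT
      simp only [hT0] at hT
      rcases Bool.or_eq_true_iff.mp hT with h | h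
      · rw [Bool.and_eq_true] at h
        exact (key x y).mpr h.1
      · have := of_decide_eq_true h
        exact (key x y).mpr (by rw [this]; exact Sb111)
  have T0spec : ∀ v, T0 v = true → (Sb v = true ∧ Sb (inv3 v) = false) ∨ v = (true,true,true) := by
    intro v h
    simp only [hT0] at h
    rcases Bool.or_eq_true_iff.mp h with h | h
    · rw [Bool.and_eq_true] at h
      exact Or.inl ⟨h.1, by simpa using h.2⟩
    · exact Or.inr (of_decide_eq_true h)
  have hcf : ∀ v, ¬(T0 v = true ∧ T0 (inv3 v) = true) := by
    rintro v ⟨h1, h2⟩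
    rcases T0spec v h1 with ⟨ha1, ha2⟩ | ha
    · rcases T0spec _ h2 with ⟨hb1, hb2⟩ | hb
      · rw [inv3_inv3, ha1] at hb2
        simp at hb2
      · rw [hb, Sb111] at ha2
        simp at ha2
    · rcases T0spec _ h2 with ⟨hb1, hb2⟩ | hb
      · rw [inv3_inv3, ha, Sb111] at hb2
        simp at hb2
      · rw [ha] at hb
        simp [inv3] at hb
  have hcons : ∀ x y z : X, x ≠ y → y ≠ z → x ≠ z →
      consis (pat x y) (pat y z) (pat x z) = true := by
    intro x y z hxy hyz hxz
    have coord : ∀ i : Fin 3,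
        consB (decide (L i x y)) (decide (L i y z)) (decide (L i x z)) = true := by
      intro i
      haveI := hlin i
      apply consB_true
      · intro h1 h2
        exact decide_eq_true (trans_of (L i) (of_decide_eq_true h1) (of_decide_eq_true h2))
      · intro h1 h2
        have n1 : ¬ L i x y := of_decide_eq_false h1
        have n2 : ¬ L i y z := of_decide_eq_false h2
        have g1 : L i y x := (total_of (L i) x y).resolve_left n1
        have g2 : L i z y := (total_of (L i) y z).resolve_left n2
        have g3 : L i z x := trans_of (L i) g2 g1
        have : ¬ L i x z := fun h => hxz (antisymm_of (L i) h g3)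
        exact decide_eq_false this
    have hre : consis (pat x y) (pat y z) (pat x z) =
        (consB (decide (L 0 x y)) (decide (L 0 y z)) (decide (L 0 x z)) &&
         consB (decide (L 1 x y)) (decide (L 1 y z)) (decide (L 1 x z)) &&
         consB (decide (L 2 x y)) (decide (L 2 y z)) (decide (L 2 x z))) := rfl
    rw [hre, coord 0, coord 1, coord 2]
    rfl
  -- pairwise complement-freeness as Bool equations
  have andf : ∀ u : V3, (T0 u && T0 (inv3 u)) = false := by
    intro u
    have := hcf u
    cases h1 : T0 u <;> cases h2 : T0 (inv3 u) <;> simp [h1, h2] at this ⊢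
  have hm := master (T0 (true,true,false)) (T0 (false,false,true)) (T0 (true,false,true))
    (T0 (false,true,false)) (T0 (false,true,true)) (T0 (true,false,false))
    (andf (true,true,false)) (andf (true,false,true)) (andf (false,true,true))
  have hT1 : T0 (true,true,true) = true := by
    simp only [hT0]
    simp
  have hT0f : T0 (false,false,false) = false := by
    simp only [hT0]
    have hi : inv3 ((false,false,false) : V3) = (true,true,true) := rfl
    rw [hi, Sb111]
    simp
  have hTT : TT (T0 (true,true,false)) (T0 (false,false,true)) (T0 (true,false,true))
      (T0 (false,true,false)) (T0 (false,true,true)) (T0 (true,false,false)) = T0 := by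
    funext v
    rcases v with ⟨a, b, c⟩
    cases a <;> cases b <;> cases c <;>
      first
        | rfl
        | (rw [hT1]; rfl)
        | (rw [hT0f]; rfl)
  rw [hTT] at hm
  have asym1p : ∀ v : V3, c1p (inv3 v) = !c1p v := fun v => rfl
  have asym1m : ∀ v : V3, c1m (inv3 v) = !c1m v := fun v => rfl
  have asym2p : ∀ v : V3, c2p (inv3 v) = !c2p v := fun v => rfl
  have asym2m : ∀ v : V3, c2m (inv3 v) = !c2m v := fun v => rfl
  have asym3p : ∀ v : V3, c3p (inv3 v) = !c3p v := fun v => rfl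
  have asym3m : ∀ v : V3, c3m (inv3 v) = !c3m v := fun v => rfl
  rcases Bool.or_eq_true_iff.mp hm with hm' | h4
  · rcases Bool.or_eq_true_iff.mp hm' with hm'' | h3
    · rcases Bool.or_eq_true_iff.mp hm'' with h1 | h2
      · unfold ok at h1
        repeat rw [Bool.and_eq_true] at h1
        exact build pat T0 c1m c1p c1p patinv hcons keyT hcf asym1m asym1p asym1p
          h1.1.1.1 h1.1.1.2 h1.1.2 h1.2
      · unfold ok at h2
        repeat rw [Bool.and_eq_true] at h2
        exact build pat T0 c2m c2p c2p patinv hcons keyT hcf asym2m asym2p asym2p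
          h2.1.1.1 h2.1.1.2 h2.1.2 h2.2
    · unfold ok at h3
      repeat rw [Bool.and_eq_true] at h3
      exact build pat T0 c3m c3p c3p patinv hcons keyT hcf asym3m asym3p asym3p
        h3.1.1.1 h3.1.1.2 h3.1.2 h3.2
  · unfold ok at h4
    repeat rw [Bool.and_eq_true] at h4
    exact build pat T0 c1p c2p c3p patinv hcons keyT hcf asym1p asym2p asym3p
      h4.1.1.1 h4.1.1.2 h4.1.2 h4.2

/-! ### The case of boolean realizers of size 2 -/

theorem realize2 {X : Type*} [PartialOrder X] [Nonempty X]
    (L : Fin 2 → X → X → Prop) (φ : (Fin 2 → Prop) → Prop)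
    (hB : IsBooleanRealizer (· ≤ ·) L φ) :
    ∃ M : Fin 2 → X → X → Prop, IsRealizer (· ≤ ·) M := by
  classical
  obtain ⟨hlin, hphi⟩ := hB
  set vf : Bool × Bool → Fin 2 → Bool := fun v i => if i.1 = 0 then v.1 else v.2 with hvf
  set pat : X → X → Bool × Bool := fun x y => (decide (L 0 x y), decide (L 1 x y)) with hpat
  have patvf : ∀ (x y : X) (i : Fin 2), (vf (pat x y) i = true) ↔ L i x y := by
    intro x y i
    fin_cases i <;> simp [hvf, hpat]
  set Sb : Bool × Bool → Bool := fun v => decide (φ (fun i => vf v i = true)) with hSb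
  have key : ∀ x y : X, x ≤ y ↔ Sb (pat x y) = true := by
    intro x y
    have h1 := hphi x y
    have harg : (fun i => L i x y) = (fun i => vf (pat x y) i = true) := by
      funext i; exact propext (patvf x y i).symm
    rw [harg] at h1
    exact h1.trans decide_eq_true_iff.symm
  have patxx : ∀ x : X, pat x x = (true, true) := by
    intro x
    have h0 : L 0 x x := by haveI := hlin 0; exact refl_of (L 0) x
    have h1 : L 1 x x := by haveI := hlin 1; exact refl_of (L 1) x
    show (decide (L 0 x x), decide (L 1 x x)) = (true, true)
    rw [decide_eq_true h0, decide_eq_true h1]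
  have Sb11 : Sb (true, true) = true := by
    obtain ⟨x0⟩ := ‹Nonempty X›
    have := (key x0 x0).mp le_rfl
    rwa [patxx x0] at this
  set inv2 : Bool × Bool → Bool × Bool := fun v => (!v.1, !v.2) with hinv2
  have patinv : ∀ x y : X, x ≠ y → pat y x = inv2 (pat x y) := by
    intro x y hne
    have flip : ∀ i : Fin 2, decide (L i y x) = !decide (L i x y) := by
      intro i
      haveI := hlin i
      by_cases h : L i x y
      · have h' : ¬ L i y x := fun h2 => hne (antisymm_of (L i) h h2)
        rw [decide_eq_true h, decide_eq_false h']
        rfl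
      · have h' : L i y x := (total_of (L i) x y).resolve_left h
        rw [decide_eq_true h', decide_eq_false h]
        rfl
    show (decide (L 0 y x), decide (L 1 y x)) =
      inv2 (decide (L 0 x y), decide (L 1 x y))
    rw [flip 0, flip 1]
  set T0 : Bool × Bool → Bool := fun v => (Sb v && !Sb (inv2 v)) || decide (v = (true, true))
    with hT0
  have keyT : ∀ x y : X, x ≠ y → (x ≤ y ↔ T0 (pat x y) = true) := by
    intro x y hne
    constructor
    · intro hxy
      have h1 : Sb (pat x y) = true := (key x y).mp hxy
      have h2 : ¬ y ≤ x := fun h => hne (le_antisymm hxy h)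
      have h3 : Sb (pat y x) = false := by
        rcases Bool.eq_false_or_eq_true (Sb (pat y x)) with h | h
        · exact absurd ((key y x).mpr h) h2
        · exact h
      rw [patinv x y hne] at h3
      simp only [hT0]
      rw [h1, h3]
      rfl
    · intro hT
      simp only [hT0] at hT
      rcases Bool.or_eq_true_iff.mp hT with h | h
      · rw [Bool.and_eq_true] at h
        exact (key x y).mpr h.1
      · have := of_decide_eq_true h
        exact (key x y).mpr (by rw [this]; exact Sb11)
  have hT11 : T0 (true, true) = true := by
    simp only [hT0]; simp
  have hT00 : T0 (false, false) = false := by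
    simp only [hT0]
    have hi : inv2 (false, false) = (true, true) := rfl
    rw [hi, Sb11]
    simp
  -- the linear-total fallback realizer
  have glue : (∀ x y : X, x ≤ y ∨ y ≤ x) → ∃ M : Fin 2 → X → X → Prop, IsRealizer (· ≤ ·) M := by
    intro htot
    refine ⟨fun _ => (· ≤ ·),
      fun _ => { refl := le_refl, trans := fun _ _ _ => le_trans,
                 antisymm := fun _ _ => le_antisymm, total := htot },
      fun _ _ _ h => h, fun x y => ⟨fun h _ => h, fun h => h 0⟩⟩
  by_cases hA : T0 (true, false) = true
  · apply glue
    intro x y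
    by_cases hne : x = y
    · exact Or.inl (le_of_eq hne)
    have hxy := keyT x y hne
    have hyx := keyT y x (Ne.symm hne)
    rw [patinv x y hne] at hyx
    rcases hp : pat x y with ⟨a, b⟩
    rw [hp] at hxy hyx
    cases a <;> cases b
    · exact Or.inr (hyx.mpr (by rw [show inv2 (false,false) = (true,true) from rfl]; exact hT11))
    · exact Or.inr (hyx.mpr (by rw [show inv2 (false,true) = (true,false) from rfl]; exact hA))
    · exact Or.inl (hxy.mpr hA)
    · exact Or.inl (hxy.mpr hT11)
  by_cases hBc : T0 (false, true) = true
  · apply glue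
    intro x y
    by_cases hne : x = y
    · exact Or.inl (le_of_eq hne)
    have hxy := keyT x y hne
    have hyx := keyT y x (Ne.symm hne)
    rw [patinv x y hne] at hyx
    rcases hp : pat x y with ⟨a, b⟩
    rw [hp] at hxy hyx
    cases a <;> cases b
    · exact Or.inr (hyx.mpr (by rw [show inv2 (false,false) = (true,true) from rfl]; exact hT11))
    · exact Or.inl (hxy.mpr hBc)
    · exact Or.inr (hyx.mpr (by rw [show inv2 (true,false) = (false,true) from rfl]; exact hBc))
    · exact Or.inl (hxy.mpr hT11)
  -- otherwise L itself is a realizer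
  have hApat : ∀ x y : X, x ≠ y → x ≤ y → pat x y = (true, true) := by
    intro x y hne hxy
    have h := (keyT x y hne).mp hxy
    rcases hp : pat x y with ⟨a, b⟩
    rw [hp] at h
    cases a <;> cases b
    · rw [hT00] at h; exact Bool.noConfusion h
    · exact absurd h hBc
    · exact absurd h hA
    · rfl
  refine ⟨L, hlin, ?_, ?_⟩
  · intro i x y hxy
    by_cases hne : x = y
    · subst hne; haveI := hlin i; exact refl_of (L i) x
    have hp := hApat x y hne hxy
    have h0 : decide (L 0 x y) = true := congrArg Prod.fst hp
    have h1 : decide (L 1 x y) = true := congrArg Prod.snd hp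
    fin_cases i
    · exact of_decide_eq_true h0
    · exact of_decide_eq_true h1
  · intro x y
    constructor
    · intro hxy i
      by_cases hne : x = y
      · subst hne; haveI := hlin i; exact refl_of (L i) x
      have hp := hApat x y hne hxy
      have h0 : decide (L 0 x y) = true := congrArg Prod.fst hp
      have h1 : decide (L 1 x y) = true := congrArg Prod.snd hp
      fin_cases i
      · exact of_decide_eq_true h0
      · exact of_decide_eq_true h1
    · intro h
      by_cases hne : x = y
      · exact le_of_eq hne
      have hp : pat x y = (true, true) := by
        show (decide (L 0 x y), decide (L 1 x y)) = (true, true)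
        rw [decide_eq_true (h 0), decide_eq_true (h 1)]
      exact (keyT x y hne).mpr (by rw [hp]; exact hT11)

/-! ### Every finite poset has a realizer -/

theorem exists_realizer (X : Type*) [PartialOrder X] [Fintype X] :
    ∃ (d : ℕ) (L : Fin d → X → X → Prop), IsRealizer (· ≤ ·) L := by
  classical
  have hz : ∀ z : X, ∃ s : X → X → Prop, IsLinearOrder X s ∧
      (∀ a b : X, a ≤ b → s a b) ∧ (∀ a b : X, a ≤ z → ¬ b ≤ z → s a b) := by
    intro z
    let r : X → X → Prop := fun a b => a ≤ b ∨ (a ≤ z ∧ ¬ b ≤ z)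
    haveI : IsPartialOrder X r := {
      refl := fun a => Or.inl le_rfl
      trans := by
        rintro a b c (hab | ⟨haz, hbz⟩) hbc
        · rcases hbc with hbc | ⟨hbz', hcz⟩
          · exact Or.inl (hab.trans hbc)
          · exact Or.inr ⟨hab.trans hbz', hcz⟩
        · rcases hbc with hbc | ⟨hbz', hcz⟩
          · exact Or.inr ⟨haz, fun hcz => hbz (hbc.trans hcz)⟩
          · exact (hbz hbz').elim
      antisymm := by
        rintro a b (hab | ⟨haz, hbz⟩) hba
        · rcases hba with hba | ⟨hbz', haz'⟩
          · exact le_antisymm hab hba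
          · exact (haz' (hab.trans hbz')).elim
        · rcases hba with hba | ⟨hbz', _⟩
          · exact (hbz (hba.trans haz)).elim
          · exact (hbz hbz').elim }
    obtain ⟨s, hs, hrs⟩ := extend_partialOrder r
    exact ⟨s, hs, fun a b hab => hrs a b (Or.inl hab), fun a b h1 h2 => hrs a b (Or.inr ⟨h1, h2⟩)⟩
  choose s hslin hsext hsrev using hz
  set e := Fintype.equivFin X with he
  refine ⟨Fintype.card X, fun i => s (e.symm i), fun i => hslin _,
    fun i x y h => hsext _ x y h, fun x y => ⟨fun h i => hsext _ x y h, ?_⟩⟩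
  intro h
  by_contra hxy
  have h1 := h (e y)
  simp only [Equiv.symm_apply_apply] at h1
  have h2 := hsrev y y x le_rfl hxy
  haveI := hslin y
  have h3 : x = y := antisymm_of (s y) h1 h2
  exact hxy (le_of_eq h3)

/-! ### Padding a boolean realizer to a larger size -/

theorem pad {X : Type*} [PartialOrder X] {d D : ℕ} (hdD : d ≤ D)
    (L : Fin d → X → X → Prop) (φ : (Fin d → Prop) → Prop)
    (h : IsBooleanRealizer (· ≤ ·) L φ)
    (s0 : X → X → Prop) (hs0 : IsLinearOrder X s0) :
    ∃ (L' : Fin D → X → X → Prop) (φ' : (Fin D → Prop) → Prop),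
      IsBooleanRealizer (· ≤ ·) L' φ' := by
  set L' : Fin D → X → X → Prop :=
    fun j x y => if hj : (j : ℕ) < d then L ⟨j, hj⟩ x y else s0 x y with hL'
  refine ⟨L', fun g => φ (fun i => g ⟨(i : ℕ), lt_of_lt_of_le i.2 hdD⟩), ?_, ?_⟩
  · intro j
    by_cases hj : (j : ℕ) < d
    · have hfix : L' j = L ⟨j, hj⟩ := by
        funext x y; simp only [hL']; rw [dif_pos hj]
      rw [hfix]; exact h.1 _
    · have hfix : L' j = s0 := by
        funext x y; simp only [hL']; rw [dif_neg hj]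
      rw [hfix]; exact hs0
  · intro x y
    have harg : (fun i : Fin d => L' ⟨(i : ℕ), lt_of_lt_of_le i.2 hdD⟩ x y)
        = (fun i => L i x y) := by
      funext i
      simp only [hL']
      rw [dif_pos (show ((⟨(i : ℕ), lt_of_lt_of_le i.2 hdD⟩ : Fin D) : ℕ) < d from i.2)]
    show x ≤ y ↔ φ (fun i => L' ⟨(i : ℕ), lt_of_lt_of_le i.2 hdD⟩ x y)
    rw [harg]
    exact h.2 x y

end BD3

/-- Every finite poset with boolean dimension at most 3 has dimension
at most 3; consequently, boolean dimension 3 and dimension 3 are equivalent. -/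
theorem boolean_dim_three_iff_dim_three (X : Type*) [PartialOrder X] [Fintype X] :
    (booleanDim X ≤ 3 → orderDim X ≤ 3) ∧ (booleanDim X = 3 ↔ orderDim X = 3) := by
  classical
  have hOeq : orderDim X
      = sInf {d : ℕ | ∃ L : Fin d → X → X → Prop, IsRealizer (· ≤ ·) L} := rfl
  have hBeq : booleanDim X
      = sInf {d : ℕ | ∃ (L : Fin d → X → X → Prop) (φ : (Fin d → Prop) → Prop),
          IsBooleanRealizer (· ≤ ·) L φ} := rfl
  obtain ⟨n, Ln, hLn⟩ := BD3.exists_realizer X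
  have toB : ∀ m : ℕ, (∃ L : Fin m → X → X → Prop, IsRealizer (· ≤ ·) L) →
      (∃ (L : Fin m → X → X → Prop) (φ : (Fin m → Prop) → Prop),
        IsBooleanRealizer (· ≤ ·) L φ) := by
    rintro m ⟨L, hL⟩
    exact ⟨L, fun g => ∀ i, g i, hL.1, fun x y => hL.2.2 x y⟩
  have hOne : {d : ℕ | ∃ L : Fin d → X → X → Prop, IsRealizer (· ≤ ·) L}.Nonempty :=
    ⟨n, Ln, hLn⟩
  have hBne : {d : ℕ | ∃ (L : Fin d → X → X → Prop) (φ : (Fin d → Prop) → Prop),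
      IsBooleanRealizer (· ≤ ·) L φ}.Nonempty := ⟨n, toB n ⟨Ln, hLn⟩⟩
  obtain ⟨s0, hs0, -⟩ := extend_partialOrder ((· ≤ ·) : X → X → Prop)
  cases isEmpty_or_nonempty X with
  | inl hE =>
    have hO0 : orderDim X = 0 := by
      rw [hOeq]
      apply Nat.sInf_eq_zero.mpr
      left
      refine ⟨fun _ _ _ => True, fun i => Fin.elim0 i, fun i => Fin.elim0 i,
        fun x y => hE.elim x⟩
    have hB0 : booleanDim X = 0 := by
      rw [hBeq]
      apply Nat.sInf_eq_zero.mpr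
      left
      exact ⟨fun i => Fin.elim0 i, fun _ => True, fun i => Fin.elim0 i, fun x y => hE.elim x⟩
    refine ⟨fun _ => hO0 ▸ Nat.zero_le 3, ?_⟩
    rw [hO0, hB0]
  | inr hNe =>
    have key3 : booleanDim X ≤ 3 → orderDim X ≤ 3 := by
      intro h3
      obtain ⟨L, φ, hLφ⟩ := Nat.sInf_mem hBne
      obtain ⟨L3, φ3, hb3⟩ := BD3.pad (hBeq ▸ h3) L φ hLφ s0 hs0
      obtain ⟨M, hM⟩ := BD3.realize3 L3 φ3 hb3
      rw [hOeq]
      exact Nat.sInf_le ⟨M, hM⟩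
    have hbo : booleanDim X ≤ orderDim X := by
      rw [hOeq, hBeq]
      exact Nat.sInf_le (toB _ (Nat.sInf_mem hOne))
    have key2 : booleanDim X ≤ 2 → orderDim X ≤ 2 := by
      intro h2
      obtain ⟨L, φ, hLφ⟩ := Nat.sInf_mem hBne
      obtain ⟨L2, φ2, hb2⟩ := BD3.pad (hBeq ▸ h2) L φ hLφ s0 hs0
      obtain ⟨M, hM⟩ := BD3.realize2 L2 φ2 hb2
      rw [hOeq]
      exact Nat.sInf_le ⟨M, hM⟩
    refine ⟨key3, ?_, ?_⟩
    · intro hb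
      have h1 : orderDim X ≤ 3 := key3 (le_of_eq hb)
      have h2 : 3 ≤ orderDim X := hb ▸ hbo
      omega
    · intro ho
      have h1 : booleanDim X ≤ 3 := le_trans hbo (le_of_eq ho)
      have h2 : 3 ≤ booleanDim X := by
        by_contra hlt
        push_neg at hlt
        have hle2 : booleanDim X ≤ 2 := by omega
        have := key2 hle2
        omega
      omega
end

section
/- In any linear extension L of the standard example S_k, there is at most one index i ∈ {1, …, k} with b_i <_L a_i. -/
/-- Underlying order of the standard example `S_k`:
`a_i = Sum.inl i` are the minimal elements, `b_j = Sum.inr j` are the maximal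
elements, and `a_i < b_j` iff `i ≠ j` (no other strict comparabilities). -/
def stdLE (k : ℕ) : Fin k ⊕ Fin k → Fin k ⊕ Fin k → Prop
  | Sum.inl i, Sum.inl j => i = j
  | Sum.inl i, Sum.inr j => i ≠ j
  | Sum.inr i, Sum.inr j => i = j
  | Sum.inr _, Sum.inl _ => False

/-- In any linear extension `L` of the standard example `S_k`, there is
at most one index `i` with `b_i <_L a_i`. -/
theorem at_most_one_reversed_pair {k : ℕ} (L : Fin k ⊕ Fin k → Fin k ⊕ Fin k → Prop)
    (hlin : IsLinearOrder (Fin k ⊕ Fin k) L)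
    (hext : ∀ x y, stdLE k x y → L x y)
    (i j : Fin k)
    (hi : L (Sum.inr i) (Sum.inl i)) (hj : L (Sum.inr j) (Sum.inl j)) :
    i = j := by
  by_contra hne
  -- For `i ≠ j` we get the cycle `a_i ≤ b_j ≤ a_j ≤ b_i ≤ a_i` in `L`.
  have hab : L (Sum.inl i) (Sum.inr j) := hext _ _ hne
  have hba : L (Sum.inr j) (Sum.inl i) :=
    hlin.trans _ _ _ hj (hlin.trans _ _ _ (hext (Sum.inl j) (Sum.inr i) (Ne.symm hne)) hi)
  exact Sum.inl_ne_inr (hlin.antisymm _ _ hab hba)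
end

section
/- For every k ≥ 2, the standard example S_k has dimension exactly k. -/
/-- The standard example `S_k` as a type. -/
def StdEx (k : ℕ) : Type := Fin k ⊕ Fin k

instance (k : ℕ) : PartialOrder (StdEx k) where
  le := stdLE k
  le_refl x := by rcases x with i | i <;> simp [stdLE]
  le_trans x y z hxy hyz := by
    rcases x with i | i <;> rcases y with j | j <;> rcases z with l | l <;>
      simp_all [stdLE]
  le_antisymm x y hxy hyx := by
    rcases x with i | i <;> rcases y with j | j <;> simp_all [stdLE] <;> rfl

instance (k : ℕ) : Fintype (StdEx k) := inferInstanceAs (Fintype (Fin k ⊕ Fin k))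

/-!
The linear extensions `L_t` (`t < k`) listing the `a_i` with `i ≠ t`, then `b_t`, `a_t`, and
then the `b_j` with `j ≠ t`, form a realizer of `S_k` once `k ≥ 2` (the non-relation
`b_i ≰ a_i` needs some `t ≠ i`). Conversely, a linear extension cannot reverse two pairs
`(a_i, b_i)`, `(a_j, b_j)` with `i ≠ j`, since `a_i < b_j < a_j < b_i < a_i` would follow;
so a realizer has at least `k` members.
-/

section Realizer

variable {X : Type*} {le : X → X → Prop}

theorem isRealizer_of_injective {α : Type*} [LinearOrder α] {d : ℕ} (f : Fin d → X → α)
    (hf : ∀ i, Function.Injective (f i)) (hle : ∀ x y, le x y ↔ ∀ i, f i x ≤ f i y) :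
    IsRealizer le (fun i x y => f i x ≤ f i y) :=
  ⟨fun i => (RelEmbedding.preimage ⟨f i, hf i⟩ (· ≤ ·)).isLinearOrder,
    fun i x y hxy => (hle x y).1 hxy i, hle⟩

theorem IsRealizer.card_le_of_crossing {d : ℕ} {L : Fin d → X → X → Prop}
    (hL : IsRealizer le L) {ι : Type*} [Fintype ι] (a b : ι → X)
    (hab : ∀ j, ¬ le (a j) (b j)) (hcross : ∀ j j', j ≠ j' → le (a j) (b j')) :
    Fintype.card ι ≤ d := by
  obtain ⟨hlin, hext, hiff⟩ := hL
  have hrev : ∀ j, ∃ i, ¬ L i (a j) (b j) := fun j => by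
    simpa only [hiff, not_forall] using hab j
  choose g hg using hrev
  suffices Function.Injective g by simpa using Fintype.card_le_of_injective g this
  intro j j' hgj
  by_contra hne
  have := hlin (g j)
  have hrev' : L (g j) (b j') (a j') :=
    (total_of (L (g j)) _ _).resolve_left (hgj ▸ hg j')
  exact hg j <| trans_of (L (g j)) (hext _ _ _ (hcross j j' hne)) <|
    trans_of (L (g j)) hrev' (hext _ _ _ (hcross j' j (Ne.symm hne)))

end Realizer

namespace StdEx

variable {k : ℕ}

/-- Position in the linear extension `L_t`. -/
def rank (t : Fin k) : StdEx k → ℕ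
  | Sum.inl i => if i = t then 2 * k + 1 else i
  | Sum.inr j => if j = t then 2 * k else 2 * k + 2 + j

theorem rank_injective (t : Fin k) : Function.Injective (rank t) := by
  rintro (i | i) (j | j) h <;> simp only [rank] at h <;> split_ifs at h <;> grind

theorem rank_mono (t : Fin k) {x y : StdEx k} (hxy : x ≤ y) : rank t x ≤ rank t y := by
  rcases x with i | i <;> rcases y with j | j <;> change stdLE k _ _ at hxy <;>
    simp only [stdLE] at hxy <;> simp only [rank] <;> split_ifs <;> grind

theorem exists_rank_lt_of_not_le (hk : 2 ≤ k) {x y : StdEx k} (hxy : ¬ x ≤ y) :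
    ∃ t, rank t y < rank t x := by
  have : Nontrivial (Fin k) := Fin.nontrivial_iff_two_le.2 hk
  rcases x with i | i <;> rcases y with j | j <;> change ¬ stdLE k _ _ at hxy <;>
    simp only [stdLE, not_not, not_false_eq_true] at hxy
  · exact ⟨i, by simp only [rank]; grind⟩
  · exact ⟨i, by simp only [rank]; grind⟩
  · rcases eq_or_ne i j with rfl | hij
    · obtain ⟨t, ht⟩ := exists_ne i
      exact ⟨t, by simp only [rank]; grind⟩
    · exact ⟨i, by simp only [rank]; grind⟩
  · exact ⟨j, by simp only [rank]; grind⟩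

theorem le_iff_forall_rank_le (hk : 2 ≤ k) (x y : StdEx k) :
    x ≤ y ↔ ∀ t, rank t x ≤ rank t y := by
  refine ⟨fun hxy t => rank_mono t hxy, fun h => ?_⟩
  by_contra hxy
  obtain ⟨t, ht⟩ := exists_rank_lt_of_not_le hk hxy
  exact (h t).not_gt ht

end StdEx

/-- For every `k ≥ 2`, the standard example `S_k` has dimension
exactly `k`. -/
theorem dim_standard_example (k : ℕ) (hk : 2 ≤ k) : orderDim (StdEx k) = k := by
  have hreal : IsRealizer (· ≤ ·) fun t (x y : StdEx k) => StdEx.rank t x ≤ StdEx.rank t y :=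
    isRealizer_of_injective _ StdEx.rank_injective (StdEx.le_iff_forall_rank_le hk)
  refine le_antisymm (Nat.sInf_le ⟨_, hreal⟩) (le_csInf ⟨k, _, hreal⟩ ?_)
  rintro d ⟨L, hL⟩
  simpa using hL.card_le_of_crossing (Sum.inl : Fin k → StdEx k) Sum.inr
    (fun _ h => h rfl) (fun _ _ h => h)
end

section
/- For every k ≥ 4, the standard example S_k has boolean dimension exactly 4. -/
namespace BDimSE

/-! ### Finite combinatorial kernel -/

/-- Table of the 24 linear orders on 4 elements `0 = aₙ, 1 = bₙ, 2 = aₘ, 3 = bₘ`,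
each encoded as a 6-bit number with bits
`(p,p',u,u',q,r) = ([0≤1],[2≤3],[0≤3],[2≤1],[0≤2],[1≤3])`. -/
def pat' : ℕ → ℕ := fun n =>
  match n with
  | 0 => 0 | 1 => 32 | 2 => 16 | 3 => 48 | 4 => 8 | 5 => 52 | 6 => 34 | 7 => 10
  | 8 => 42 | 9 => 38 | 10 => 54 | 11 => 46 | 12 => 17 | 13 => 9 | 14 => 25
  | 15 => 21 | 16 => 53 | 17 => 29 | 18 => 11 | 19 => 55 | 20 => 15 | 21 => 47
  | 22 => 31 | _ => 63

def force (n : ℕ) (k : ℕ → Bool) : Bool := Nat.casesOn n (k 0) (fun m => k (m + 1))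

theorem force_eq (n : ℕ) (k : ℕ → Bool) : force n k = k n := by cases n <;> rfl

def bitf (x n : ℕ) : ℕ := n / 2 ^ x % 2

def cod (x pi pj pl : ℕ) : ℕ := bitf x pi + 2 * bitf x pj + 4 * bitf x pl

def okB (v w : ℕ) : Bool :=
  (v != w) && (v != 7) && (v != 0) && (w != 7) && (w != 0) &&
    ((w == 7 - v) || (v % 2 + v / 2 % 2 + v / 4 % 2 == w % 2 + w / 2 % 2 + w / 4 % 2))

abbrev okN (v w : ℕ) : Prop :=
  v ≠ w ∧ v ≠ 7 ∧ v ≠ 0 ∧ w ≠ 7 ∧ w ≠ 0 ∧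
    (w = 7 - v ∨ v % 2 + v / 2 % 2 + v / 4 % 2 = w % 2 + w / 2 % 2 + w / 4 % 2)

theorem okB_iff (v w : ℕ) : okB v w = true ↔ okN v w := by
  simp [okB, okN, and_assoc]

def body (c1 c2 c3 c4 c5 c6 : ℕ) : Bool :=
  (c3 == c1) || ((c3 == 7 - c1) || ((c3 == c2) || ((c3 == 7 - c2) || ((c3 == c5) || ((c3 == 7 - c5) || ((c3 == c6) || ((c3 == 7 - c6) || ((c3 == 7 - c3) || ((c3 == 7 - c4) || ((c4 == c1) || ((c4 == 7 - c1) || ((c4 == c2) || ((c4 == 7 - c2) || ((c4 == c5) || ((c4 == 7 - c5) || ((c4 == c6) || ((c4 == 7 - c6) || ((c4 == 7 - c3) || ((c4 == 7 - c4) || ((7 == c1) || ((7 == 7 - c1) || ((7 == c2) || ((7 == 7 - c2) || ((7 == c5) || ((7 == 7 - c5) || ((7 == c6) || ((7 == 7 - c6) || ((7 == 7 - c3) || ((7 == 7 - c4) || (okB c1 c2))))))))))))))))))))))))))))))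

def chk (i j l : ℕ) : Bool :=
  force (pat' i) fun pi =>
  force (pat' j) fun pj =>
  force (pat' l) fun pl =>
  force (cod 0 pi pj pl) fun c1 =>
  force (cod 1 pi pj pl) fun c2 =>
  force (cod 2 pi pj pl) fun c3 =>
  force (cod 3 pi pj pl) fun c4 =>
  force (cod 4 pi pj pl) fun c5 =>
  force (cod 5 pi pj pl) fun c6 =>
  body c1 c2 c3 c4 c5 c6

set_option maxHeartbeats 16000000 in
set_option maxRecDepth 10000 in
theorem allChk : ((List.range 24).all fun i => (List.range 24).all fun j =>
    (List.range 24).all fun l => chk i j l) = true := by decide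

theorem chk_true (i j l : ℕ) (hi : i < 24) (hj : j < 24) (hl : l < 24) :
    chk i j l = true := by
  have h := allChk
  rw [List.all_eq_true] at h
  have h1 := h i (List.mem_range.mpr hi)
  rw [List.all_eq_true] at h1
  have h2 := h1 j (List.mem_range.mpr hj)
  rw [List.all_eq_true] at h2
  exact h2 l (List.mem_range.mpr hl)

def natOf (b0 b1 b2 : Bool) : ℕ :=
  (cond b0 1 0) + 2 * (cond b1 1 0) + 4 * (cond b2 1 0)

def natOf6 (b1 b2 b3 b4 b5 b6 : Bool) : ℕ :=
  (cond b1 1 0) + 2 * (cond b2 1 0) + 4 * (cond b3 1 0) + 8 * (cond b4 1 0) +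
    16 * (cond b5 1 0) + 32 * (cond b6 1 0)

theorem natOf_inj : ∀ b0 b1 b2 c0 c1 c2 : Bool,
    natOf b0 b1 b2 = natOf c0 c1 c2 → b0 = c0 ∧ b1 = c1 ∧ b2 = c2 := by decide

theorem natOf_neg : ∀ b0 b1 b2 : Bool,
    natOf (!b0) (!b1) (!b2) = 7 - natOf b0 b1 b2 := by decide

theorem natOf_lt : ∀ b0 b1 b2 : Bool, natOf b0 b1 b2 < 8 := by decide

theorem bitf_natOf6 : ∀ b1 b2 b3 b4 b5 b6 : Bool,
    bitf 0 (natOf6 b1 b2 b3 b4 b5 b6) = cond b1 1 0 ∧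
    bitf 1 (natOf6 b1 b2 b3 b4 b5 b6) = cond b2 1 0 ∧
    bitf 2 (natOf6 b1 b2 b3 b4 b5 b6) = cond b3 1 0 ∧
    bitf 3 (natOf6 b1 b2 b3 b4 b5 b6) = cond b4 1 0 ∧
    bitf 4 (natOf6 b1 b2 b3 b4 b5 b6) = cond b5 1 0 ∧
    bitf 5 (natOf6 b1 b2 b3 b4 b5 b6) = cond b6 1 0 := by decide

/-- The transitivity pattern check for 4 elements. -/
def mat6 (p p' u u' q r : Bool) : Fin 4 → Fin 4 → Bool := fun x y =>
  match x.val, y.val with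
  | 0, 0 => true | 1, 1 => true | 2, 2 => true | 3, 3 => true
  | 0, 1 => p | 1, 0 => !p
  | 2, 3 => p' | 3, 2 => !p'
  | 0, 3 => u | 3, 0 => !u
  | 2, 1 => u' | 1, 2 => !u'
  | 0, 2 => q | 2, 0 => !q
  | 1, 3 => r | _, _ => !r

abbrev tcheck (p p' u u' q r : Bool) : Prop :=
  ∀ x y z : Fin 4, mat6 p p' u u' q r x y = true → mat6 p p' u u' q r y z = true →
    mat6 p p' u u' q r x z = true

theorem exists_pat : ∀ p p' u u' q r : Bool, tcheck p p' u u' q r →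
    ∃ i : Fin 24, pat' i.val = natOf6 p p' u u' q r := by decide

set_option synthInstance.maxHeartbeats 1000000 in
set_option synthInstance.maxSize 2000 in
set_option maxHeartbeats 4000000 in
theorem pigeonN : ∀ v0 v1 v2 v3 : Fin 8,
    okN v0.val v1.val → okN v0.val v2.val → okN v0.val v3.val →
    okN v1.val v2.val → okN v1.val v3.val → okN v2.val v3.val → False := by decide

theorem chk_eq (i j l : ℕ) : chk i j l =
    body (cod 0 (pat' i) (pat' j) (pat' l)) (cod 1 (pat' i) (pat' j) (pat' l))
      (cod 2 (pat' i) (pat' j) (pat' l)) (cod 3 (pat' i) (pat' j) (pat' l))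
      (cod 4 (pat' i) (pat' j) (pat' l)) (cod 5 (pat' i) (pat' j) (pat' l)) := by
  simp only [chk, force_eq]

set_option maxHeartbeats 1600000 in
theorem core' (C1 C2 C3 C4 C5 C6 : ℕ)
    (hex : ∃ i j l : Fin 24,
      C1 = cod 0 (pat' i.val) (pat' j.val) (pat' l.val) ∧
      C2 = cod 1 (pat' i.val) (pat' j.val) (pat' l.val) ∧
      C3 = cod 2 (pat' i.val) (pat' j.val) (pat' l.val) ∧
      C4 = cod 3 (pat' i.val) (pat' j.val) (pat' l.val) ∧
      C5 = cod 4 (pat' i.val) (pat' j.val) (pat' l.val) ∧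
      C6 = cod 5 (pat' i.val) (pat' j.val) (pat' l.val))
    (h1 : C3 ≠ C1)
    (h2 : C3 ≠ 7 - C1)
    (h3 : C3 ≠ C2)
    (h4 : C3 ≠ 7 - C2)
    (h5 : C3 ≠ C5)
    (h6 : C3 ≠ 7 - C5)
    (h7 : C3 ≠ C6)
    (h8 : C3 ≠ 7 - C6)
    (h9 : C3 ≠ 7 - C3)
    (h10 : C3 ≠ 7 - C4)
    (h11 : C4 ≠ C1)
    (h12 : C4 ≠ 7 - C1)
    (h13 : C4 ≠ C2)
    (h14 : C4 ≠ 7 - C2)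
    (h15 : C4 ≠ C5)
    (h16 : C4 ≠ 7 - C5)
    (h17 : C4 ≠ C6)
    (h18 : C4 ≠ 7 - C6)
    (h19 : C4 ≠ 7 - C3)
    (h20 : C4 ≠ 7 - C4)
    (h21 : 7 ≠ C1)
    (h22 : 7 ≠ 7 - C1)
    (h23 : 7 ≠ C2)
    (h24 : 7 ≠ 7 - C2)
    (h25 : 7 ≠ C5)
    (h26 : 7 ≠ 7 - C5)
    (h27 : 7 ≠ C6)
    (h28 : 7 ≠ 7 - C6)
    (h29 : 7 ≠ 7 - C3)
    (h30 : 7 ≠ 7 - C4)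
    : okN C1 C2 := by
  obtain ⟨i, j, l, e1, e2, e3, e4, e5, e6⟩ := hex
  subst e1 e2 e3 e4 e5 e6
  have hc := chk_true i.val j.val l.val i.isLt j.isLt l.isLt
  rw [chk_eq] at hc
  unfold body at hc
  simp only [Bool.or_eq_true, beq_iff_eq] at hc
  rcases hc with hc|hc|hc|hc|hc|hc|hc|hc|hc|hc|hc|hc|hc|hc|hc|hc|hc|hc|hc|hc|hc|hc|hc|hc|hc|hc|hc|hc|hc|hc|hc
  · exact absurd hc h1
  · exact absurd hc h2
  · exact absurd hc h3
  · exact absurd hc h4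
  · exact absurd hc h5
  · exact absurd hc h6
  · exact absurd hc h7
  · exact absurd hc h8
  · exact absurd hc h9
  · exact absurd hc h10
  · exact absurd hc h11
  · exact absurd hc h12
  · exact absurd hc h13
  · exact absurd hc h14
  · exact absurd hc h15
  · exact absurd hc h16
  · exact absurd hc h17
  · exact absurd hc h18
  · exact absurd hc h19
  · exact absurd hc h20
  · exact absurd hc h21
  · exact absurd hc h22
  · exact absurd hc h23
  · exact absurd hc h24
  · exact absurd hc h25
  · exact absurd hc h26
  · exact absurd hc h27
  · exact absurd hc h28
  · exact absurd hc h29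
  · exact absurd hc h30
  · exact (okB_iff _ _).mp hc

noncomputable def pbit (p : Prop) : Bool := @decide p (Classical.propDecidable p)

theorem pbit_iff {p : Prop} : pbit p = true ↔ p :=
  @decide_eq_true_iff p (Classical.propDecidable p)

theorem pbit_true {p : Prop} (h : p) : pbit p = true := pbit_iff.mpr h

theorem pbit_false {p : Prop} (h : ¬p) : pbit p = false := by
  cases hb : pbit p
  · rfl
  · exact absurd (pbit_iff.mp hb) h

theorem pbit_inj {p q : Prop} (h : pbit p = pbit q) : p ↔ q := by
  constructor
  · intro hp; exact pbit_iff.mp (h ▸ pbit_true hp)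
  · intro hq; exact pbit_iff.mp (h.symm ▸ pbit_true hq)

variable {α : Type*} {r : α → α → Prop}

theorem lin_refl (h : IsLinearOrder α r) (x : α) : r x x :=
  by haveI := h; exact refl_of r x

theorem lin_trans (h : IsLinearOrder α r) {x y z : α} (h1 : r x y) (h2 : r y z) : r x z :=
  h.toIsPartialOrder.toIsPreorder.toIsTrans.trans _ _ _ h1 h2

theorem lin_antisymm (h : IsLinearOrder α r) {x y : α} (h1 : r x y) (h2 : r y x) : x = y :=
  by haveI := h; exact antisymm h1 h2

theorem lin_total (h : IsLinearOrder α r) (x y : α) : r x y ∨ r y x :=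
  by haveI := h; exact total_of r x y

theorem not_rel_iff (h : IsLinearOrder α r) {x y : α} (hxy : x ≠ y) : ¬r x y ↔ r y x := by
  constructor
  · intro hn
    rcases lin_total h x y with h1 | h1
    · exact absurd h1 hn
    · exact h1
  · intro h1 h2
    exact hxy (lin_antisymm h h2 h1)

theorem pbit_swap (h : IsLinearOrder α r) {x y : α} (hxy : x ≠ y) :
    pbit (r y x) = !(pbit (r x y)) := by
  by_cases hr : r x y
  · rw [pbit_true hr, pbit_false (fun h2 => hxy (lin_antisymm h hr h2))]
    rfl
  · rw [pbit_false hr, pbit_true ((not_rel_iff h hxy).mp hr)]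
    rfl

theorem tcheck_of_linear (h : IsLinearOrder α r) (e : Fin 4 → α)
    (he : ∀ x y : Fin 4, x ≠ y → e x ≠ e y) :
    tcheck (pbit (r (e 0) (e 1))) (pbit (r (e 2) (e 3))) (pbit (r (e 0) (e 3)))
      (pbit (r (e 2) (e 1))) (pbit (r (e 0) (e 2))) (pbit (r (e 1) (e 3))) := by
  have key : ∀ x y : Fin 4,
      mat6 (pbit (r (e 0) (e 1))) (pbit (r (e 2) (e 3))) (pbit (r (e 0) (e 3)))
        (pbit (r (e 2) (e 1))) (pbit (r (e 0) (e 2))) (pbit (r (e 1) (e 3))) x y = true ↔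
      r (e x) (e y) := by
    intro x y
    fin_cases x <;> fin_cases y
    · exact iff_of_true rfl (lin_refl h _)
    · exact pbit_iff
    · exact pbit_iff
    · exact pbit_iff
    · show (!pbit (r (e 0) (e 1))) = true ↔ r (e 1) (e 0)
      rw [← pbit_swap h (he 0 1 (by decide))]; exact pbit_iff
    · exact iff_of_true rfl (lin_refl h _)
    · show (!pbit (r (e 2) (e 1))) = true ↔ r (e 1) (e 2)
      rw [← pbit_swap h (he 2 1 (by decide))]; exact pbit_iff
    · exact pbit_iff
    · show (!pbit (r (e 0) (e 2))) = true ↔ r (e 2) (e 0)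
      rw [← pbit_swap h (he 0 2 (by decide))]; exact pbit_iff
    · exact pbit_iff
    · exact iff_of_true rfl (lin_refl h _)
    · exact pbit_iff
    · show (!pbit (r (e 0) (e 3))) = true ↔ r (e 3) (e 0)
      rw [← pbit_swap h (he 0 3 (by decide))]; exact pbit_iff
    · show (!pbit (r (e 1) (e 3))) = true ↔ r (e 3) (e 1)
      rw [← pbit_swap h (he 1 3 (by decide))]; exact pbit_iff
    · show (!pbit (r (e 2) (e 3))) = true ↔ r (e 3) (e 2)
      rw [← pbit_swap h (he 2 3 (by decide))]; exact pbit_iff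
    · exact iff_of_true rfl (lin_refl h _)
  intro x y z h1 h2
  exact (key x z).mpr (lin_trans h ((key x y).mp h1) ((key y z).mp h2))

theorem isLinearOrder_of_key (key : α → ℕ) (hinj : Function.Injective key) :
    IsLinearOrder α (fun x y => key x ≤ key y) :=
  { refl := fun _ => Nat.le_refl _
    trans := fun _ _ _ h1 h2 => Nat.le_trans h1 h2
    antisymm := fun _ _ h1 h2 => hinj (Nat.le_antisymm h1 h2)
    total := fun _ _ => Nat.le_total _ _ }


/-! ### Bridge to posets -/

theorem cod_spec0 (a1 a2 a3 a4 a5 a6 b1 b2 b3 b4 b5 b6 c1 c2 c3 c4 c5 c6 : Bool) :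
    cod 0 (natOf6 a1 a2 a3 a4 a5 a6) (natOf6 b1 b2 b3 b4 b5 b6) (natOf6 c1 c2 c3 c4 c5 c6)
      = natOf a1 b1 c1 := by
  show bitf 0 _ + 2 * bitf 0 _ + 4 * bitf 0 _ = _
  rw [(bitf_natOf6 a1 a2 a3 a4 a5 a6).1, (bitf_natOf6 b1 b2 b3 b4 b5 b6).1,
    (bitf_natOf6 c1 c2 c3 c4 c5 c6).1]
  rfl

theorem cod_spec1 (a1 a2 a3 a4 a5 a6 b1 b2 b3 b4 b5 b6 c1 c2 c3 c4 c5 c6 : Bool) :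
    cod 1 (natOf6 a1 a2 a3 a4 a5 a6) (natOf6 b1 b2 b3 b4 b5 b6) (natOf6 c1 c2 c3 c4 c5 c6)
      = natOf a2 b2 c2 := by
  show bitf 1 _ + 2 * bitf 1 _ + 4 * bitf 1 _ = _
  rw [(bitf_natOf6 a1 a2 a3 a4 a5 a6).2.1, (bitf_natOf6 b1 b2 b3 b4 b5 b6).2.1,
    (bitf_natOf6 c1 c2 c3 c4 c5 c6).2.1]
  rfl

theorem cod_spec2 (a1 a2 a3 a4 a5 a6 b1 b2 b3 b4 b5 b6 c1 c2 c3 c4 c5 c6 : Bool) :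
    cod 2 (natOf6 a1 a2 a3 a4 a5 a6) (natOf6 b1 b2 b3 b4 b5 b6) (natOf6 c1 c2 c3 c4 c5 c6)
      = natOf a3 b3 c3 := by
  show bitf 2 _ + 2 * bitf 2 _ + 4 * bitf 2 _ = _
  rw [(bitf_natOf6 a1 a2 a3 a4 a5 a6).2.2.1, (bitf_natOf6 b1 b2 b3 b4 b5 b6).2.2.1,
    (bitf_natOf6 c1 c2 c3 c4 c5 c6).2.2.1]
  rfl

theorem cod_spec3 (a1 a2 a3 a4 a5 a6 b1 b2 b3 b4 b5 b6 c1 c2 c3 c4 c5 c6 : Bool) :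
    cod 3 (natOf6 a1 a2 a3 a4 a5 a6) (natOf6 b1 b2 b3 b4 b5 b6) (natOf6 c1 c2 c3 c4 c5 c6)
      = natOf a4 b4 c4 := by
  show bitf 3 _ + 2 * bitf 3 _ + 4 * bitf 3 _ = _
  rw [(bitf_natOf6 a1 a2 a3 a4 a5 a6).2.2.2.1, (bitf_natOf6 b1 b2 b3 b4 b5 b6).2.2.2.1,
    (bitf_natOf6 c1 c2 c3 c4 c5 c6).2.2.2.1]
  rfl

theorem cod_spec4 (a1 a2 a3 a4 a5 a6 b1 b2 b3 b4 b5 b6 c1 c2 c3 c4 c5 c6 : Bool) :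
    cod 4 (natOf6 a1 a2 a3 a4 a5 a6) (natOf6 b1 b2 b3 b4 b5 b6) (natOf6 c1 c2 c3 c4 c5 c6)
      = natOf a5 b5 c5 := by
  show bitf 4 _ + 2 * bitf 4 _ + 4 * bitf 4 _ = _
  rw [(bitf_natOf6 a1 a2 a3 a4 a5 a6).2.2.2.2.1, (bitf_natOf6 b1 b2 b3 b4 b5 b6).2.2.2.2.1,
    (bitf_natOf6 c1 c2 c3 c4 c5 c6).2.2.2.2.1]
  rfl

theorem cod_spec5 (a1 a2 a3 a4 a5 a6 b1 b2 b3 b4 b5 b6 c1 c2 c3 c4 c5 c6 : Bool) :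
    cod 5 (natOf6 a1 a2 a3 a4 a5 a6) (natOf6 b1 b2 b3 b4 b5 b6) (natOf6 c1 c2 c3 c4 c5 c6)
      = natOf a6 b6 c6 := by
  show bitf 5 _ + 2 * bitf 5 _ + 4 * bitf 5 _ = _
  rw [(bitf_natOf6 a1 a2 a3 a4 a5 a6).2.2.2.2.2, (bitf_natOf6 b1 b2 b3 b4 b5 b6).2.2.2.2.2,
    (bitf_natOf6 c1 c2 c3 c4 c5 c6).2.2.2.2.2]
  rfl

abbrev Ae (k : ℕ) (n : Fin k) : StdEx k := Sum.inl n
abbrev Be (k : ℕ) (n : Fin k) : StdEx k := Sum.inr n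

noncomputable def vN {k : ℕ} (L : Fin 3 → StdEx k → StdEx k → Prop) (x y : StdEx k) : ℕ :=
  natOf (pbit (L 0 x y)) (pbit (L 1 x y)) (pbit (L 2 x y))

theorem no3 {k : ℕ} (hk : 4 ≤ k) (L : Fin 3 → StdEx k → StdEx k → Prop)
    (hlin : ∀ i, IsLinearOrder (StdEx k) (L i)) (φ : (Fin 3 → Prop) → Prop)
    (hiff : ∀ x y : StdEx k, stdLE k x y ↔ φ (fun i => L i x y)) : False := by
  have conflict : ∀ x y x' y' : StdEx k, stdLE k x y → ¬ stdLE k x' y' →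
      vN L x y ≠ vN L x' y' := by
    intro x y x' y' h1 h2 heq
    obtain ⟨e0, e1, e2⟩ := natOf_inj _ _ _ _ _ _ heq
    have hfun : (fun i : Fin 3 => L i x y) = fun i => L i x' y' := by
      funext i
      fin_cases i
      · exact propext (pbit_inj e0)
      · exact propext (pbit_inj e1)
      · exact propext (pbit_inj e2)
    exact h2 ((hiff x' y').mpr (hfun ▸ (hiff x y).mp h1))
  have swapN : ∀ x y : StdEx k, x ≠ y → vN L y x = 7 - vN L x y := by
    intro x y hxy
    show natOf _ _ _ = 7 - natOf _ _ _
    rw [pbit_swap (hlin 0) hxy, pbit_swap (hlin 1) hxy, pbit_swap (hlin 2) hxy, natOf_neg]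
  have diagN : ∀ x : StdEx k, vN L x x = 7 := by
    intro x
    show natOf _ _ _ = 7
    rw [pbit_true (lin_refl (hlin 0) x), pbit_true (lin_refl (hlin 1) x),
      pbit_true (lin_refl (hlin 2) x)]
    rfl
  have conflict7 : ∀ x y x' y' : StdEx k, stdLE k x y → ¬ stdLE k y' x' → x' ≠ y' →
      vN L x y ≠ 7 - vN L x' y' := by
    intro x y x' y' h1 h2 hne
    rw [← swapN x' y' hne]
    exact conflict _ _ _ _ h1 h2
  have hok : ∀ n m : Fin k, n ≠ m →
      okN (vN L (Ae k n) (Be k n)) (vN L (Ae k m) (Be k m)) := by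
    intro n m hnm
    have dANBM : ∀ a b : Fin k, Ae k a ≠ Be k b := fun a b h => Sum.inl_ne_inr h
    have dAA : Ae k n ≠ Ae k m := fun h => hnm (Sum.inl.inj h)
    have dBB : Be k n ≠ Be k m := fun h => hnm (Sum.inr.inj h)
    have Tnm : stdLE k (Ae k n) (Be k m) := hnm
    have Tmn : stdLE k (Ae k m) (Be k n) := Ne.symm hnm
    have Fnn : ¬ stdLE k (Ae k n) (Be k n) := fun h => h rfl
    have Fmm : ¬ stdLE k (Ae k m) (Be k m) := fun h => h rfl
    have FnnR : ¬ stdLE k (Be k n) (Ae k n) := fun h => h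
    have FmmR : ¬ stdLE k (Be k m) (Ae k m) := fun h => h
    have FAA : ¬ stdLE k (Ae k n) (Ae k m) := hnm
    have FAA2 : ¬ stdLE k (Ae k m) (Ae k n) := Ne.symm hnm
    have FBB : ¬ stdLE k (Be k n) (Be k m) := hnm
    have FBB2 : ¬ stdLE k (Be k m) (Be k n) := Ne.symm hnm
    have FRnm : ¬ stdLE k (Be k m) (Ae k n) := fun h => h
    have FRmn : ¬ stdLE k (Be k n) (Ae k m) := fun h => h
    have conflictD : ∀ x' y' : StdEx k, ¬ stdLE k x' y' → (7 : ℕ) ≠ vN L x' y' := by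
      intro x' y' h2
      rw [← diagN (Ae k n)]
      exact conflict _ _ _ _ rfl h2
    have conflictD7 : ∀ x' y' : StdEx k, ¬ stdLE k y' x' → x' ≠ y' →
        (7 : ℕ) ≠ 7 - vN L x' y' := by
      intro x' y' h2 hne
      rw [← swapN x' y' hne]
      exact conflictD _ _ h2
    have hpatt : ∀ t : Fin 3, ∃ i : Fin 24, pat' i.val =
        natOf6 (pbit (L t (Ae k n) (Be k n))) (pbit (L t (Ae k m) (Be k m)))
          (pbit (L t (Ae k n) (Be k m))) (pbit (L t (Ae k m) (Be k n)))
          (pbit (L t (Ae k n) (Ae k m))) (pbit (L t (Be k n) (Be k m))) := by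
      intro t
      apply exists_pat
      have he : ∀ x y : Fin 4, x ≠ y →
          (![Ae k n, Be k n, Ae k m, Be k m] : Fin 4 → StdEx k) x ≠
          (![Ae k n, Be k n, Ae k m, Be k m] : Fin 4 → StdEx k) y := by
        intro x y hxy
        fin_cases x <;> fin_cases y
        · exact absurd rfl hxy
        · exact dANBM n n
        · exact dAA
        · exact dANBM n m
        · exact Ne.symm (dANBM n n)
        · exact absurd rfl hxy
        · exact Ne.symm (dANBM m n)
        · exact dBB
        · exact Ne.symm dAA
        · exact dANBM m n
        · exact absurd rfl hxy
        · exact dANBM m m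
        · exact Ne.symm (dANBM n m)
        · exact Ne.symm dBB
        · exact Ne.symm (dANBM m m)
        · exact absurd rfl hxy
      exact tcheck_of_linear (hlin t) ![Ae k n, Be k n, Ae k m, Be k m] he
    choose f hf using hpatt
    have e1 : vN L (Ae k n) (Be k n)
        = cod 0 (pat' (f 0).val) (pat' (f 1).val) (pat' (f 2).val) := by
      rw [hf 0, hf 1, hf 2, cod_spec0]; rfl
    have e2 : vN L (Ae k m) (Be k m)
        = cod 1 (pat' (f 0).val) (pat' (f 1).val) (pat' (f 2).val) := by
      rw [hf 0, hf 1, hf 2, cod_spec1]; rfl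
    have e3 : vN L (Ae k n) (Be k m)
        = cod 2 (pat' (f 0).val) (pat' (f 1).val) (pat' (f 2).val) := by
      rw [hf 0, hf 1, hf 2, cod_spec2]; rfl
    have e4 : vN L (Ae k m) (Be k n)
        = cod 3 (pat' (f 0).val) (pat' (f 1).val) (pat' (f 2).val) := by
      rw [hf 0, hf 1, hf 2, cod_spec3]; rfl
    have e5 : vN L (Ae k n) (Ae k m)
        = cod 4 (pat' (f 0).val) (pat' (f 1).val) (pat' (f 2).val) := by
      rw [hf 0, hf 1, hf 2, cod_spec4]; rfl
    have e6 : vN L (Be k n) (Be k m)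
        = cod 5 (pat' (f 0).val) (pat' (f 1).val) (pat' (f 2).val) := by
      rw [hf 0, hf 1, hf 2, cod_spec5]; rfl
    exact core' _ _ _ _ _ _ ⟨f 0, f 1, f 2, e1, e2, e3, e4, e5, e6⟩
      (conflict _ _ _ _ Tnm Fnn) (conflict7 _ _ _ _ Tnm FnnR (dANBM n n))
      (conflict _ _ _ _ Tnm Fmm) (conflict7 _ _ _ _ Tnm FmmR (dANBM m m))
      (conflict _ _ _ _ Tnm FAA) (conflict7 _ _ _ _ Tnm FAA2 dAA)
      (conflict _ _ _ _ Tnm FBB) (conflict7 _ _ _ _ Tnm FBB2 dBB)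
      (conflict7 _ _ _ _ Tnm FRnm (dANBM n m)) (conflict7 _ _ _ _ Tnm FRmn (dANBM m n))
      (conflict _ _ _ _ Tmn Fnn) (conflict7 _ _ _ _ Tmn FnnR (dANBM n n))
      (conflict _ _ _ _ Tmn Fmm) (conflict7 _ _ _ _ Tmn FmmR (dANBM m m))
      (conflict _ _ _ _ Tmn FAA) (conflict7 _ _ _ _ Tmn FAA2 dAA)
      (conflict _ _ _ _ Tmn FBB) (conflict7 _ _ _ _ Tmn FBB2 dBB)
      (conflict7 _ _ _ _ Tmn FRnm (dANBM n m)) (conflict7 _ _ _ _ Tmn FRmn (dANBM m n))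
      (conflictD _ _ Fnn) (conflictD7 _ _ FnnR (dANBM n n))
      (conflictD _ _ Fmm) (conflictD7 _ _ FmmR (dANBM m m))
      (conflictD _ _ FAA) (conflictD7 _ _ FAA2 dAA)
      (conflictD _ _ FBB) (conflictD7 _ _ FBB2 dBB)
      (conflictD7 _ _ FRnm (dANBM n m)) (conflictD7 _ _ FRmn (dANBM m n))
  have hlt : ∀ n : Fin k, vN L (Ae k n) (Be k n) < 8 := fun n => natOf_lt _ _ _
  have hcne : ∀ i j : Fin 4, i ≠ j → Fin.castLE hk i ≠ Fin.castLE hk j := by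
    intro i j hij h
    exact hij (Fin.castLE_injective hk h)
  exact pigeonN ⟨_, hlt (Fin.castLE hk 0)⟩ ⟨_, hlt (Fin.castLE hk 1)⟩
    ⟨_, hlt (Fin.castLE hk 2)⟩ ⟨_, hlt (Fin.castLE hk 3)⟩
    (hok _ _ (hcne 0 1 (by decide))) (hok _ _ (hcne 0 2 (by decide)))
    (hok _ _ (hcne 0 3 (by decide))) (hok _ _ (hcne 1 2 (by decide)))
    (hok _ _ (hcne 1 3 (by decide))) (hok _ _ (hcne 2 3 (by decide)))

/-! ### Padding to exactly 3 orders -/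

theorem isLinearOrder_congr {α : Type*} {r s : α → α → Prop} (h : ∀ x y, r x y ↔ s x y)
    (hs : IsLinearOrder α s) : IsLinearOrder α r :=
  { refl := fun a => (h a a).mpr (lin_refl hs a)
    trans := fun a b c hab hbc => (h a c).mpr (lin_trans hs ((h a b).mp hab) ((h b c).mp hbc))
    antisymm := fun a b hab hba => lin_antisymm hs ((h a b).mp hab) ((h b a).mp hba)
    total := fun a b => (lin_total hs a b).imp (h a b).mpr (h b a).mpr }

theorem lower_bound {k : ℕ} (hk : 4 ≤ k) {d : ℕ} (hd : d ≤ 3)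
    (L : Fin d → StdEx k → StdEx k → Prop) (φ : (Fin d → Prop) → Prop)
    (h : IsBooleanRealizer ((· ≤ ·) : StdEx k → StdEx k → Prop) L φ) : False := by
  obtain ⟨hlin, hiff⟩ := h
  have hinj : Function.Injective
      ((Sum.elim (fun i : Fin k => i.val) fun i : Fin k => k + i.val) : StdEx k → ℕ) := by
    rintro (i | i) (j | j) h
    · exact congrArg Sum.inl (Fin.ext h)
    · exfalso; have := i.isLt; simp only [Sum.elim_inl, Sum.elim_inr] at h; omega
    · exfalso; have := j.isLt; simp only [Sum.elim_inl, Sum.elim_inr] at h; omega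
    · refine congrArg Sum.inr (Fin.ext ?_)
      simp only [Sum.elim_inr] at h; omega
  refine no3 hk
    (fun t x y => if h : (t : ℕ) < d then L ⟨t, h⟩ x y
      else Sum.elim (fun i : Fin k => i.val) (fun i : Fin k => k + i.val) x ≤
        Sum.elim (fun i : Fin k => i.val) (fun i : Fin k => k + i.val) y)
    ?_ (fun g => φ fun i => g (Fin.castLE hd i)) ?_
  · intro t
    by_cases h : (t : ℕ) < d
    · exact isLinearOrder_congr (fun x y => by simp only [dif_pos h]) (hlin ⟨t, h⟩)
    · exact isLinearOrder_congr (fun x y => by simp only [dif_neg h]) (isLinearOrder_of_key _ hinj)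
  · intro x y
    show stdLE k x y ↔ _
    refine (hiff x y).trans (iff_of_eq (congrArg φ (funext fun i => ?_)))
    beta_reduce
    rw [dif_pos (show ((Fin.castLE hd i : Fin 3) : ℕ) < d from i.isLt)]
    rfl

/-! ### Upper bound: an explicit boolean realizer of size 4 -/

def aval (k t n : ℕ) : ℕ :=
  if t = 0 then 2 * n else if t = 1 then 2 * (k - 1 - n) else if t = 2 then n else k + n

def bval (k t n : ℕ) : ℕ :=
  if t = 0 then 2 * n + 1 else if t = 1 then 2 * (k - 1 - n) + 1 else if t = 2 then k + n
    else n

def ukey (k t : ℕ) : StdEx k → ℕ :=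
  Sum.elim (fun i : Fin k => aval k t i.val) (fun i : Fin k => bval k t i.val)

theorem ukey_inj4 (k : ℕ) (t : Fin 4) : Function.Injective (ukey k t.val) := by
  fin_cases t <;>
  · rintro (i | i) (j | j) h <;>
      have hi := i.isLt <;> have hj := j.isLt <;>
      norm_num [ukey, aval, bval] at h <;>
      first
        | (exact congrArg Sum.inl (Fin.ext (by omega)))
        | (exact congrArg Sum.inr (Fin.ext (by omega)))
        | (exact absurd h (by omega))

theorem upper_bound {k : ℕ} (hk : 4 ≤ k) :
    ∃ (L : Fin 4 → StdEx k → StdEx k → Prop) (φ : (Fin 4 → Prop) → Prop),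
      IsBooleanRealizer ((· ≤ ·) : StdEx k → StdEx k → Prop) L φ := by
  refine ⟨fun t x y => ukey k t.val x ≤ ukey k t.val y,
    fun g => (g 2 ∧ ¬ g 3 ∧ ¬(g 0 ∧ g 1)) ∨ (g 0 ∧ g 1 ∧ g 2 ∧ g 3),
    fun t => isLinearOrder_of_key _ (ukey_inj4 k t), ?_⟩
  rintro (i | i) (j | j) <;>
    (show stdLE k _ _ ↔ _) <;>
    have hi := i.isLt <;> have hj := j.isLt <;>
    simp only [stdLE, ukey, Sum.elim_inl, Sum.elim_inr, aval, bval,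
      show ((0 : Fin 4) : ℕ) = 0 from rfl, show ((1 : Fin 4) : ℕ) = 1 from rfl,
      show ((2 : Fin 4) : ℕ) = 2 from rfl, show ((3 : Fin 4) : ℕ) = 3 from rfl,
      if_pos, if_neg, Fin.ext_iff, Ne] <;>
    norm_num <;>
    omega

end BDimSE

/-- For every `k ≥ 4`, the standard example `S_k` has boolean dimension
exactly `4`. -/
theorem boolean_dim_standard_example (k : ℕ) (hk : 4 ≤ k) : booleanDim (StdEx k) = 4 := by
  have hub : 4 ∈ {d : ℕ | ∃ (L : Fin d → StdEx k → StdEx k → Prop)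
      (φ : (Fin d → Prop) → Prop), IsBooleanRealizer (· ≤ ·) L φ} := BDimSE.upper_bound hk
  have hlb : ∀ m ∈ {d : ℕ | ∃ (L : Fin d → StdEx k → StdEx k → Prop)
      (φ : (Fin d → Prop) → Prop), IsBooleanRealizer (· ≤ ·) L φ}, 4 ≤ m := by
    intro m hm
    by_contra hlt
    push_neg at hlt
    obtain ⟨L, φ, h⟩ := hm
    exact BDimSE.lower_bound hk (Nat.lt_succ_iff.mp hlt) L φ h
  exact le_antisymm (Nat.sInf_le hub)
    (hlb _ (Nat.sInf_mem ⟨4, hub⟩))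
end

section
/- For every k ≥ 3, the standard example S_k has local dimension exactly 3. -/
/-!
Two linear extensions of `S_k` (a's below b's, both in increasing resp. decreasing order of the
index) reverse every incomparable pair except the critical pairs `(a_i, b_i)`; adding for each `i`
the two-element extension `b_i < a_i` gives a local realizer of width 3.

Conversely, in a local realizer of width 2 two incomparable elements are reversed in both
directions, so they occur in exactly the same two extensions. Hence all `a_i` occur in the same two
extensions, and one extension reverses at most one critical pair (`b_p < a_p` and `b_q < a_q` force
`b_p < a_p < b_q < a_q < b_p`), which leaves room for only two of the `k ≥ 3` critical pairs.
-/

open Set Function Sum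

namespace PLE

variable {X : Type*} {le : X → X → Prop}

def ofInjective {Y : Type*} [LinearOrder Y] (f : X → Y) (hf : Injective f)
    (hmono : ∀ x y, le x y → f x ≤ f y) : PLE le where
  dom := univ
  rel x y := f x ≤ f y
  mem_left _ _ _ := mem_univ _
  mem_right _ _ _ := mem_univ _
  refl _ _ := le_rfl
  antisymm _ _ h h' := hf (le_antisymm h h')
  trans _ _ _ := le_trans
  total x _ y _ := le_total (f x) (f y)
  le_imp x _ y _ := hmono x y

def pair (x y : X) (hxy : ¬ le x y) : PLE le where
  dom := {x, y}
  rel u v := u = v ∧ u ∈ ({x, y} : Set X) ∨ u = y ∧ v = x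
  mem_left := by grind
  mem_right := by grind
  refl u hu := Or.inl ⟨rfl, hu⟩
  antisymm := by grind
  trans := by grind
  total := by grind
  le_imp := by grind

theorem eq_of_le_of_rel (L : PLE le) {x y : X} (hxy : le x y) (hyx : L.rel y x) : y = x :=
  L.antisymm _ _ hyx (L.le_imp x (L.mem_right _ _ hyx) y (L.mem_left _ _ hyx) hxy)

end PLE

theorem isLocalRealizer_iff {X ι : Type*} [Preorder X] (L : ι → PLE ((· ≤ ·) : X → X → Prop)) :
    IsLocalRealizer L ↔ ∀ x y : X, ¬ x ≤ y → ∃ i, (L i).rel y x := by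
  refine ⟨fun hL x y hxy => ?_, fun h x y => ⟨?_, fun hrev => ?_⟩⟩
  · by_contra! hnot
    exact hxy ((hL x y).2 fun i hi => hnot i hi.1)
  · rintro hxy i ⟨hyx, hne⟩
    exact hne ((L i).eq_of_le_of_rel hxy hyx)
  · by_contra hxy
    obtain ⟨i, hi⟩ := h x y hxy
    exact hrev i ⟨hi, fun e => hxy (e ▸ le_rfl)⟩

section Width

variable {X ι κ : Type*} {le : X → X → Prop}

theorem exists_fin_of_isLocalRealizer [Finite ι] {L : ι → PLE le} {d : ℕ}
    (hL : IsLocalRealizer L) (hW : WidthAtMost L d) :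
    ∃ (t : ℕ) (L' : Fin t → PLE le), IsLocalRealizer L' ∧ WidthAtMost L' d := by
  obtain ⟨t, ⟨e⟩⟩ := Finite.exists_equiv_fin ι
  refine ⟨t, L ∘ e.symm, fun x y => (hL x y).trans e.symm.forall_congr_right.symm, fun x => ?_⟩
  exact (ncard_preimage_of_injective_subset_range e.symm.injective (by simp)).trans_le (hW x)

theorem widthAtMost_of_card_le [Finite ι] (L : ι → PLE le) {d : ℕ} (h : Nat.card ι ≤ d) :
    WidthAtMost L d :=
  fun _ => (ncard_le_card _).trans h

theorem WidthAtMost.sum_elim [Finite ι] [Finite κ] {L₁ : ι → PLE le} {L₂ : κ → PLE le}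
    {d₁ d₂ : ℕ} (h₁ : WidthAtMost L₁ d₁) (h₂ : WidthAtMost L₂ d₂) :
    WidthAtMost (Sum.elim L₁ L₂) (d₁ + d₂) := by
  intro x
  have hsplit : {i | x ∈ (Sum.elim L₁ L₂ i).dom} =
      inl '' {i | x ∈ (L₁ i).dom} ∪ inr '' {j | x ∈ (L₂ j).dom} := by
    ext (i | j) <;> simp
  calc _ ≤ (inl '' {i | x ∈ (L₁ i).dom} : Set (ι ⊕ κ)).ncard
          + (inr '' {j | x ∈ (L₂ j).dom} : Set (ι ⊕ κ)).ncard := hsplit ▸ ncard_union_le _ _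
    _ ≤ d₁ + d₂ := by
      rw [ncard_image_of_injective _ inl_injective, ncard_image_of_injective _ inr_injective]
      exact add_le_add (h₁ x) (h₂ x)

theorem widthAtMost_one_of_pairwise_disjoint {L : ι → PLE le}
    (hL : Pairwise (Disjoint on fun i => (L i).dom)) : WidthAtMost L 1 :=
  fun x =>
    have hx : {i | x ∈ (L i).dom}.Subsingleton := fun _ hi _ hj =>
      hL.eq (not_disjoint_iff.2 ⟨x, hi, hj⟩)
    (ncard_le_one_iff hx.finite).2 fun hi hj => hx hi hj

end Width

theorem IsLocalRealizer.setOf_mem_dom_eq {X ι : Type*} [Preorder X] [Finite ι]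
    {L : ι → PLE ((· ≤ ·) : X → X → Prop)} (hL : IsLocalRealizer L) (hW : WidthAtMost L 2)
    {x y : X} (hxy : ¬ x ≤ y) (hyx : ¬ y ≤ x) :
    {i | x ∈ (L i).dom} = {i | y ∈ (L i).dom} := by
  obtain ⟨i, hi⟩ := (isLocalRealizer_iff L).1 hL x y hxy
  obtain ⟨j, hj⟩ := (isLocalRealizer_iff L).1 hL y x hyx
  have hij : i ≠ j := by
    rintro rfl
    exact hxy ((L i).antisymm _ _ hj hi ▸ le_rfl)
  have hx : {i, j} ⊆ {i | x ∈ (L i).dom} := by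
    rintro _ (rfl | rfl)
    exacts [(L _).mem_right _ _ hi, (L _).mem_left _ _ hj]
  have hy : {i, j} ⊆ {i | y ∈ (L i).dom} := by
    rintro _ (rfl | rfl)
    exacts [(L _).mem_left _ _ hi, (L _).mem_right _ _ hj]
  rw [← eq_of_subset_of_ncard_le hx ((hW x).trans_eq (ncard_pair hij).symm) (toFinite _),
    ← eq_of_subset_of_ncard_le hy ((hW y).trans_eq (ncard_pair hij).symm) (toFinite _)]

namespace StdEx

variable {k : ℕ}

def a (i : Fin k) : StdEx k := inl i

def b (i : Fin k) : StdEx k := inr i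

@[elab_as_elim, induction_eliminator]
protected theorem induction {motive : StdEx k → Prop} (a : ∀ i, motive (StdEx.a i))
    (b : ∀ i, motive (StdEx.b i)) (x : StdEx k) : motive x := by
  rcases x with i | i
  exacts [a i, b i]

@[simp] theorem a_inj {i j : Fin k} : a i = a j ↔ i = j := inl_injective.eq_iff
@[simp] theorem b_inj {i j : Fin k} : b i = b j ↔ i = j := inr_injective.eq_iff
@[simp] theorem a_ne_b {i j : Fin k} : a i ≠ b j := inl_ne_inr
@[simp] theorem b_ne_a {i j : Fin k} : b i ≠ a j := inr_ne_inl

@[simp] theorem a_le_a {i j : Fin k} : a i ≤ a j ↔ i = j := Iff.rfl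
@[simp] theorem a_le_b {i j : Fin k} : a i ≤ b j ↔ i ≠ j := Iff.rfl

variable (k) in
def ascExt : PLE ((· ≤ ·) : StdEx k → StdEx k → Prop) :=
  PLE.ofInjective (toLex : Fin k ⊕ Fin k → Fin k ⊕ₗ Fin k) toLex.injective
    (by rintro (i | i) (j | j) (h : stdLE k _ _) <;> simp_all [stdLE])

variable (k) in
def descExt : PLE ((· ≤ ·) : StdEx k → StdEx k → Prop) :=
  PLE.ofInjective (toLex ∘ Sum.map OrderDual.toDual OrderDual.toDual :
      Fin k ⊕ Fin k → (Fin k)ᵒᵈ ⊕ₗ (Fin k)ᵒᵈ)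
    (toLex.injective.comp
      (map_injective.2 ⟨OrderDual.toDual.injective, OrderDual.toDual.injective⟩))
    (by rintro (i | i) (j | j) (h : stdLE k _ _) <;> simp_all [stdLE])

variable (k) in
def localRealizer : Fin 2 ⊕ Fin k → PLE ((· ≤ ·) : StdEx k → StdEx k → Prop) :=
  Sum.elim ![ascExt k, descExt k] fun m => PLE.pair (a m) (b m) (by simp)

theorem isLocalRealizer_localRealizer (k : ℕ) : IsLocalRealizer (localRealizer k) := by
  rw [isLocalRealizer_iff]
  intro x y hxy
  induction x with
  | a i =>
    induction y with
    | a j =>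
      obtain h | h := le_total i j
      exacts [⟨inl 1, Lex.inl h⟩, ⟨inl 0, Lex.inl h⟩]
    | b j =>
      obtain rfl : i = j := by simpa using hxy
      exact ⟨inr i, Or.inr ⟨rfl, rfl⟩⟩
  | b i =>
    induction y with
    | a j => exact ⟨inl 0, Lex.sep _ _⟩
    | b j =>
      obtain h | h := le_total i j
      exacts [⟨inl 1, Lex.inr h⟩, ⟨inl 0, Lex.inr h⟩]

theorem widthAtMost_localRealizer (k : ℕ) : WidthAtMost (localRealizer k) 3 :=
  WidthAtMost.sum_elim (d₁ := 2) (widthAtMost_of_card_le _ (by simp))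
    (widthAtMost_one_of_pairwise_disjoint fun m m' hmm' => by
      simp [PLE.pair, hmm'.symm])

theorem eq_of_rel_b_a (L : PLE ((· ≤ ·) : StdEx k → StdEx k → Prop)) {p q : Fin k}
    (hp : L.rel (b p) (a p)) (hq : L.rel (b q) (a q)) : p = q := by
  by_contra hpq
  have hpq' : L.rel (a p) (b q) := L.le_imp _ (L.mem_right _ _ hp) _ (L.mem_left _ _ hq) hpq
  have hqp' : L.rel (a q) (b p) :=
    L.le_imp _ (L.mem_right _ _ hq) _ (L.mem_left _ _ hp) (Ne.symm hpq)
  exact hpq (b_inj.1 (L.antisymm _ _ (L.trans _ _ _ hp hpq') (L.trans _ _ _ hq hqp')))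

theorem three_le_of_isLocalRealizer {ι : Type*} [Finite ι] (hk : 3 ≤ k) {d : ℕ}
    {L : ι → PLE ((· ≤ ·) : StdEx k → StdEx k → Prop)}
    (hL : IsLocalRealizer L) (hW : WidthAtMost L d) : 3 ≤ d := by
  by_contra! hd
  have hW2 : WidthAtMost L 2 := fun x => by have := hW x; omega
  choose n hn using fun p : Fin k => (isLocalRealizer_iff L).1 hL (a p) (b p) (by simp)
  let p₀ : Fin k := ⟨0, by omega⟩
  have hdom (p : Fin k) : {i | a p ∈ (L i).dom} = {i | a p₀ ∈ (L i).dom} := by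
    rcases eq_or_ne p p₀ with rfl | hp
    · rfl
    · exact hL.setOf_mem_dom_eq hW2 (by simpa using hp) (by simpa using hp.symm)
  have : k ≤ 2 := calc
    k = (univ : Set (Fin k)).ncard := by simp
    _ ≤ {i | a p₀ ∈ (L i).dom}.ncard :=
      ncard_le_ncard_of_injOn n (fun p _ => hdom p ▸ (L (n p)).mem_right _ _ (hn p))
        (fun p _ q _ h => eq_of_rel_b_a _ (hn p) (h ▸ hn q)) (toFinite _)
    _ ≤ 2 := hW2 _
  omega

end StdEx

/-- For every `k ≥ 3`, the standard example `S_k` has local dimension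
exactly `3`. -/
theorem local_dim_standard_example (k : ℕ) (hk : 3 ≤ k) : localDim (StdEx k) = 3 := by
  have h3 := exists_fin_of_isLocalRealizer (StdEx.isLocalRealizer_localRealizer k)
    (StdEx.widthAtMost_localRealizer k)
  refine le_antisymm (Nat.sInf_le h3) (le_csInf ⟨3, h3⟩ ?_)
  rintro d ⟨t, L, hL, hW⟩
  exact StdEx.three_le_of_isLocalRealizer hk hL hW
end

section
/- For every n ≥ 2, the incidence poset P_n of the complete graph on n vertices has boolean dimension at most 4. -/
/-- The incidence poset `P_n` of the complete graph `K_n` as a type: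
vertices (`inl`) and 2-element edge sets (`inr`). -/
def IncPoset (n : ℕ) : Type := Fin n ⊕ {s : Finset (Fin n) // s.card = 2}

/-- Underlying order of the incidence poset: `v < e` iff `v ∈ e`. -/
def incLE (n : ℕ) : IncPoset n → IncPoset n → Prop
  | Sum.inl v, Sum.inl w => v = w
  | Sum.inl v, Sum.inr e => v ∈ e.1
  | Sum.inr e, Sum.inr f => e = f
  | Sum.inr _, Sum.inl _ => False

instance (n : ℕ) : PartialOrder (IncPoset n) where
  le := incLE n
  le_refl x := by rcases x with v | e <;> simp [incLE]
  le_trans x y z hxy hyz := by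
    rcases x with v | e <;> rcases y with w | f <;> rcases z with u | g <;>
      simp_all [incLE]
  le_antisymm x y hxy hyx := by
    rcases x with v | e <;> rcases y with w | f <;> simp_all [incLE] <;> rfl

instance (n : ℕ) : Fintype (IncPoset n) :=
  inferInstanceAs (Fintype (Fin n ⊕ {s : Finset (Fin n) // s.card = 2}))

/-!
Order the vertices linearly and write each edge `e` as `{lo e, hi e}` with `lo e < hi e`.
List the vertices in increasing order and insert every edge right after its endpoint `lo e`;
do the same with `hi e`, and repeat both with the vertex order (and the tie-break among edges)
reversed. In these four linear orders a vertex `v` precedes an edge `e` iff `v ≤ lo e`,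
`lo e ≤ v`, `v ≤ hi e`, `hi e ≤ v` respectively, so `v ∈ e` iff
`lo e ≤ v ∧ v ≤ hi e ∧ (v ≤ lo e ∨ hi e ≤ v)`. The same boolean formula forces equality of two
vertices or of two edges, as it contains two orders that are reverse to each other on vertices
(resp. on edges), and it fails for an edge below a vertex because `lo e < hi e`.
-/

open Function OrderDual

section Anchored

variable {V E : Type*} (p : E → V)

def anchorKey : V ⊕ E → V ×ₗ (V ⊕ₗ E)
  | .inl v => toLex (v, toLex (.inl v))
  | .inr e => toLex (p e, toLex (.inr e))

lemma anchorKey_injective : Injective (anchorKey p) := by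
  rintro (v | e) (w | f) h <;> simp_all [anchorKey]

variable [LinearOrder V] [LinearOrder E]

def anchorLE : V ⊕ E → V ⊕ E → Prop := (· ≤ ·) on anchorKey p

lemma isLinearOrder_anchorLE : IsLinearOrder (V ⊕ E) (anchorLE p) :=
  (anchorKey_injective p).isLinearOrder_onFun _

variable {p}

@[simp] lemma anchorLE_inl_inl {v w : V} : anchorLE p (.inl v) (.inl w) ↔ v ≤ w := by
  simp [anchorLE, onFun, anchorKey, Prod.Lex.toLex_le_toLex, le_iff_lt_or_eq (a := v)]; tauto

@[simp] lemma anchorLE_inl_inr {v : V} {e : E} : anchorLE p (.inl v) (.inr e) ↔ v ≤ p e := by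
  simp [anchorLE, onFun, anchorKey, Prod.Lex.toLex_le_toLex, le_iff_lt_or_eq (a := v)]

@[simp] lemma anchorLE_inr_inl {e : E} {v : V} : anchorLE p (.inr e) (.inl v) ↔ p e < v := by
  simp [anchorLE, onFun, anchorKey, Prod.Lex.toLex_le_toLex]

@[simp] lemma anchorLE_inr_inr {e f : E} :
    anchorLE p (.inr e) (.inr f) ↔ toLex (p e, e) ≤ toLex (p f, f) := by
  simp [anchorLE, onFun, anchorKey, Prod.Lex.toLex_le_toLex]

variable (p) in
def dualAnchorLE : V ⊕ E → V ⊕ E → Prop :=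
  anchorLE (toDual ∘ p ∘ ofDual) on Sum.map toDual toDual

variable (p) in
lemma isLinearOrder_dualAnchorLE : IsLinearOrder (V ⊕ E) (dualAnchorLE p) :=
  haveI := isLinearOrder_anchorLE (toDual ∘ p ∘ ofDual)
  (Sum.map_injective.2 ⟨toDual.injective, toDual.injective⟩).isLinearOrder_onFun _

@[simp] lemma dualAnchorLE_inl_inl {v w : V} : dualAnchorLE p (.inl v) (.inl w) ↔ w ≤ v := by
  simp [dualAnchorLE, onFun]

@[simp] lemma dualAnchorLE_inl_inr {v : V} {e : E} :
    dualAnchorLE p (.inl v) (.inr e) ↔ p e ≤ v := by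
  simp [dualAnchorLE, onFun]

@[simp] lemma dualAnchorLE_inr_inl {e : E} {v : V} :
    dualAnchorLE p (.inr e) (.inl v) ↔ v < p e := by
  simp [dualAnchorLE, onFun]

@[simp] lemma dualAnchorLE_inr_inr {e f : E} :
    dualAnchorLE p (.inr e) (.inr f) ↔ toLex (p f, f) ≤ toLex (p e, e) := by
  simp [dualAnchorLE, onFun, Prod.Lex.toLex_le_toLex, eq_comm]

end Anchored

section Incidence

variable {V E : Type*} [LinearOrder V] (lo hi : E → V)

def incidenceRel : V ⊕ E → V ⊕ E → Prop
  | .inl v, .inl w => v = w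
  | .inl v, .inr e => v = lo e ∨ v = hi e
  | .inr e, .inr f => e = f
  | .inr _, .inl _ => False

def incidenceRealizer [LinearOrder E] : Fin 4 → V ⊕ E → V ⊕ E → Prop :=
  ![anchorLE lo, dualAnchorLE lo, anchorLE hi, dualAnchorLE hi]

def incidenceFormula (b : Fin 4 → Prop) : Prop := b 1 ∧ b 2 ∧ (b 0 ∨ b 3)

variable {lo hi}

lemma eq_or_eq_iff_of_lt {v a b : V} (hab : a < b) :
    v = a ∨ v = b ↔ a ≤ v ∧ v ≤ b ∧ (v ≤ a ∨ b ≤ v) := by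
  constructor
  · rintro (rfl | rfl) <;> simp [hab.le]
  · rintro ⟨hav, hvb, hva | hbv⟩
    · exact .inl (le_antisymm hva hav)
    · exact .inr (le_antisymm hvb hbv)

theorem isBooleanRealizer_incidence [LinearOrder E] (hlt : ∀ e, lo e < hi e) :
    IsBooleanRealizer (incidenceRel lo hi) (incidenceRealizer lo hi) incidenceFormula := by
  refine ⟨fun i => ?_, ?_⟩
  · fin_cases i
    exacts [isLinearOrder_anchorLE lo, isLinearOrder_dualAnchorLE lo,
      isLinearOrder_anchorLE hi, isLinearOrder_dualAnchorLE hi]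
  rintro (v | e) (w | f) <;>
    simp only [incidenceRel, incidenceRealizer, incidenceFormula, Matrix.cons_val, anchorLE_inl_inl,
      anchorLE_inl_inr, anchorLE_inr_inl, anchorLE_inr_inr, dualAnchorLE_inl_inl,
      dualAnchorLE_inl_inr, dualAnchorLE_inr_inl, dualAnchorLE_inr_inr]
  · exact ⟨fun h => by simp [h], fun ⟨hwv, hvw, _⟩ => le_antisymm hvw hwv⟩
  · exact eq_or_eq_iff_of_lt (hlt f)
  · exact iff_of_false id fun ⟨hwlo, hhiw, _⟩ => (hwlo.trans (hlt e)).not_gt hhiw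
  · refine ⟨fun h => by simp [h], ?_⟩
    rintro ⟨hlo, hhi, hlo' | hhi'⟩
    · exact (Prod.mk.inj (toLex.injective (le_antisymm hlo' hlo))).2
    · exact (Prod.mk.inj (toLex.injective (le_antisymm hhi hhi'))).2

theorem booleanDimRel_incidenceRel_le_four (hlt : ∀ e, lo e < hi e) :
    booleanDimRel (incidenceRel lo hi) ≤ 4 :=
  have ⟨_, _⟩ := exists_wellFoundedLT E
  Nat.sInf_le ⟨_, _, isBooleanRealizer_incidence hlt⟩

end Incidence

lemma Finset.mem_iff_eq_min'_or_eq_max'_of_card_eq_two {α : Type*} [LinearOrder α]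
    {s : Finset α} (hs : s.card = 2) (h : s.Nonempty) {a : α} :
    a ∈ s ↔ a = s.min' h ∨ a = s.max' h := by
  obtain ⟨x, y, -, rfl⟩ := Finset.card_eq_two.1 hs
  rcases le_total x y with hxy | hxy <;> simp [hxy, or_comm]

theorem boolean_dim_incidence_poset_general (n : ℕ) :
    booleanDim (IncPoset n) ≤ 4 := by
  have hne (e : {s : Finset (Fin n) // s.card = 2}) : e.1.Nonempty :=
    Finset.card_pos.1 (by omega)
  have hrel : ((· ≤ ·) : IncPoset n → IncPoset n → Prop) =
      incidenceRel (fun e => e.1.min' (hne e)) (fun e => e.1.max' (hne e)) := by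
    funext x y
    rcases x with v | e <;> rcases y with w | f
    case inl.inr => exact propext (Finset.mem_iff_eq_min'_or_eq_max'_of_card_eq_two f.2 _)
    all_goals rfl
  rw [booleanDim, hrel]
  exact booleanDimRel_incidenceRel_le_four fun e => Finset.min'_lt_max'_of_card _ (by omega)

/-- For every `n ≥ 2`, the incidence poset `P_n` of the complete graph
on `n` vertices has boolean dimension at most `4`. -/
theorem boolean_dim_incidence_poset (n : ℕ) (hn : 2 ≤ n) :
    booleanDim (IncPoset n) ≤ 4 :=
  boolean_dim_incidence_poset_general n
end

section
/- For every d there exists n₀ such that for all n ≥ n₀, the incidence poset P_n of the complete graph on n vertices has local dimension greater than d; that is, the local dimension of P_n tends to infinity as n tends to infinity. -/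
/-!
A local realizer of `P_n` of width `d` must, for all `x < y < z`, contain some `L i` putting the
edge `xz` below the vertex `y`. Colour the triple by the positions of `i` among the at most `d`
extensions whose domain contains `y`, resp. `xz`. By Ramsey's theorem for triples, for large `n`
some `a < b < c < e` spans four triples of one colour. Comparing positions along `abc, abe`
(vertex `b`), `abe, ace` (edge `ae`) and `ace, bce` (vertex `c`) shows that a single `L i` puts
`ac` below `b` and `be` below `c`; since also `c < ac` and `b < be`, this forces `b = c`.
-/

open Finset

section Ramsey

variable {α κ : Type*}

def PairEndHomogeneous [LT α] (g : α → α → κ) (t : Finset α) : Prop :=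
  ∀ x ∈ t, ∀ y ∈ t, ∀ z ∈ t, x < y → x < z → g x y = g x z

def TripleEndHomogeneous [LT α] (f : α → α → α → κ) (t : Finset α) : Prop :=
  ∀ x ∈ t, ∀ y ∈ t, ∀ z ∈ t, ∀ w ∈ t, x < y → y < z → y < w → f x y z = f x y w

variable [LinearOrder α]

lemma Finset.mem_of_mem_insert_of_lt {t : Finset α} {a x v : α} (hat : ∀ y ∈ t, a < y)
    (hx : x ∈ insert a t) (hv : v ∈ insert a t) (hxv : x < v) : v ∈ t := by
  refine (mem_insert.1 hv).resolve_left ?_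
  rintro rfl
  rcases mem_insert.1 hx with rfl | hx
  exacts [hxv.false, (hat x hx).not_gt hxv]

lemma PairEndHomogeneous.mono {g : α → α → κ} {r t : Finset α} (hr : PairEndHomogeneous g r)
    (htr : t ⊆ r) : PairEndHomogeneous g t :=
  fun x hx y hy z hz => hr x (htr hx) y (htr hy) z (htr hz)

lemma PairEndHomogeneous.insert_of_forall_lt {g : α → α → κ} {t : Finset α} {a : α}
    (ht : PairEndHomogeneous g t) (hat : ∀ x ∈ t, a < x)
    (ha : ∀ y ∈ t, ∀ z ∈ t, g a y = g a z) :
    PairEndHomogeneous g (insert a t) := by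
  intro x hx y hy z hz hxy hxz
  have hyt := mem_of_mem_insert_of_lt hat hx hy hxy
  have hzt := mem_of_mem_insert_of_lt hat hx hz hxz
  rcases mem_insert.1 hx with rfl | hx
  exacts [ha y hyt z hzt, ht x hx y hyt z hzt hxy hxz]

lemma TripleEndHomogeneous.insert_of_forall_lt {f : α → α → α → κ} {t : Finset α} {a : α}
    (ht : TripleEndHomogeneous f t) (hat : ∀ x ∈ t, a < x) (ha : PairEndHomogeneous (f a) t) :
    TripleEndHomogeneous f (insert a t) := by
  intro x hx y hy z hz w hw hxy hyz hyw
  have hyt := mem_of_mem_insert_of_lt hat hx hy hxy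
  have hzt := mem_of_mem_insert_of_lt hat hy hz hyz
  have hwt := mem_of_mem_insert_of_lt hat hy hw hyw
  rcases mem_insert.1 hx with rfl | hx
  exacts [ha y hyt z hzt w hwt hyz hyw, ht x hx y hyt z hzt w hwt hxy hyz hyw]

theorem exists_pairEndHomogeneous (κ : Type*) [Fintype κ] (m : ℕ) :
    ∃ N, ∀ {α : Type*} [LinearOrder α] (g : α → α → κ) (s : Finset α), N ≤ #s →
      ∃ t ⊆ s, m ≤ #t ∧ PairEndHomogeneous g t := by
  classical
  induction m with
  | zero => exact ⟨0, fun _ _ _ => ⟨∅, empty_subset _, le_rfl, by simp [PairEndHomogeneous]⟩⟩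
  | succ m ih =>
    obtain ⟨N, hN⟩ := ih
    refine ⟨Fintype.card κ * N + 1, fun g s hs => ?_⟩
    have hne : s.Nonempty := card_pos.1 (by omega)
    set a := s.min' hne
    have : Nonempty κ := ⟨g a a⟩
    obtain ⟨c, -, hc⟩ := exists_le_card_fiber_of_mul_le_card_of_maps_to (f := g a)
      (s := s.erase a) (n := N) (fun _ _ => mem_univ _) univ_nonempty
      (by rw [card_univ, card_erase_of_mem (min'_mem _ _)]; omega)
    obtain ⟨t, hts, hmt, ht⟩ := hN g _ hc
    have hat : ∀ x ∈ t, a < x := fun x hx =>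
      min'_lt_of_mem_erase_min' _ _ (mem_of_mem_filter _ (hts hx))
    refine ⟨insert a t, insert_subset (min'_mem _ _) fun x hx => ?_, ?_,
      ht.insert_of_forall_lt hat fun y hy z hz => ?_⟩
    · exact mem_of_mem_erase (mem_of_mem_filter _ (hts hx))
    · rw [card_insert_of_notMem fun h => (hat a h).false]; omega
    · rw [(mem_filter.1 (hts hy)).2, (mem_filter.1 (hts hz)).2]

theorem exists_tripleEndHomogeneous (κ : Type*) [Fintype κ] (m : ℕ) :
    ∃ N, ∀ {α : Type*} [LinearOrder α] (f : α → α → α → κ) (s : Finset α), N ≤ #s →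
      ∃ t ⊆ s, m ≤ #t ∧ TripleEndHomogeneous f t := by
  classical
  induction m with
  | zero => exact ⟨0, fun _ _ _ => ⟨∅, empty_subset _, le_rfl, by simp [TripleEndHomogeneous]⟩⟩
  | succ m ih =>
    obtain ⟨N, hN⟩ := ih
    obtain ⟨N₂, hN₂⟩ := exists_pairEndHomogeneous κ N
    refine ⟨N₂ + 1, fun f s hs => ?_⟩
    have hne : s.Nonempty := card_pos.1 (by omega)
    set a := s.min' hne
    obtain ⟨r, hrs, hNr, hr⟩ := hN₂ (f a) (s.erase a)
      (by rw [card_erase_of_mem (min'_mem _ _)]; omega)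
    obtain ⟨t, htr, hmt, ht⟩ := hN f r hNr
    have hat : ∀ x ∈ t, a < x := fun x hx => min'_lt_of_mem_erase_min' _ _ (hrs (htr hx))
    refine ⟨insert a t, insert_subset (min'_mem _ _) fun x hx => ?_, ?_,
      ht.insert_of_forall_lt hat (hr.mono htr)⟩
    · exact mem_of_mem_erase (hrs (htr hx))
    · rw [card_insert_of_notMem fun h => (hat a h).false]; omega

theorem exists_monochromatic_quadruple (κ : Type*) [Fintype κ] :
    ∃ N, ∀ {α : Type*} [LinearOrder α] [Fintype α], N ≤ Fintype.card α →
      ∀ f : α → α → α → κ, ∃ a b c d, a < b ∧ b < c ∧ c < d ∧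
        f a b c = f a b d ∧ f a b d = f a c d ∧ f a c d = f b c d := by
  classical
  obtain ⟨N₂, hN₂⟩ := exists_pairEndHomogeneous κ (Fintype.card κ + 2)
  obtain ⟨N₃, hN₃⟩ := exists_tripleEndHomogeneous κ (N₂ + 1)
  refine ⟨N₃, fun hα f => ?_⟩
  obtain ⟨T, -, hT, hTf⟩ := hN₃ f univ (by rwa [card_univ])
  have hTne : T.Nonempty := card_pos.1 (by omega)
  set top := T.max' hTne
  obtain ⟨U, hUT, hU, hUg⟩ := hN₂ (fun x y => f x y top) (T.erase top)
    (by rw [card_erase_of_mem (max'_mem _ _)]; omega)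
  have hUne : U.Nonempty := card_pos.1 (by omega)
  set r := U.max' hUne
  -- on `U` the colour `f x y top` depends only on `x`, so `p` and `q` below share it
  obtain ⟨p, hp, q, hq, hpq, hcol⟩ := exists_ne_map_eq_of_card_lt_of_maps_to (t := univ)
    (s := U.erase r) (f := fun x => f x r top)
    (by rw [card_univ, card_erase_of_mem (max'_mem _ _)]; omega)
    (fun _ _ => mem_coe.2 (mem_univ _))
  wlog hlt : p < q generalizing p q
  · exact this q hq p hp hpq.symm hcol.symm (lt_of_le_of_ne (not_lt.1 hlt) hpq.symm)
  have hUT' : ∀ x ∈ U, x ∈ T ∧ x < top := fun x hx =>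
    ⟨mem_of_mem_erase (hUT hx), lt_max'_of_mem_erase_max' _ _ (hUT hx)⟩
  have hpU := mem_of_mem_erase hp
  have hqU := mem_of_mem_erase hq
  have hqr : q < r := lt_max'_of_mem_erase_max' _ _ hq
  have hpr : p < r := hlt.trans hqr
  have hrU : r ∈ U := max'_mem _ _
  refine ⟨p, q, r, top, hlt, hqr, (hUT' r hrU).2, ?_, hUg p hpU q hqU r hrU hlt hpr, hcol⟩
  exact hTf p (hUT' p hpU).1 q (hUT' q hqU).1 r (hUT' r hrU).1 top (max'_mem _ _) hlt hqr
    ((hUT' q hqU).2)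

end Ramsey

section LocalRealizer

variable {X : Type*} {le : X → X → Prop}

lemma PLE.eq_of_rel_of_rel_of_le (L : PLE le) {a b v w : X} (hav : L.rel a v) (hbw : L.rel b w)
    (hwa : le w a) (hvb : le v b) : v = w :=
  L.antisymm v w
    (L.trans _ _ _ (L.le_imp v (L.mem_right _ _ hav) b (L.mem_left _ _ hbw) hvb) hbw)
    (L.trans _ _ _ (L.le_imp w (L.mem_right _ _ hbw) a (L.mem_left _ _ hav) hwa) hav)

lemma IsLocalRealizer.exists_rel_of_not_le {ι : Type*} {L : ι → PLE le} (hL : IsLocalRealizer L)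
    {x y : X} (h : ¬ le x y) : ∃ i, (L i).rel y x := by
  by_contra! h'
  exact h ((hL x y).2 fun i hi => h' i hi.1)

lemma WidthAtMost.nonempty_embedding {ι : Type*} [Finite ι] {L : ι → PLE le} {d : ℕ}
    (hL : WidthAtMost L d) (x : X) : Nonempty ({i | x ∈ (L i).dom} ↪ Fin d) := by
  have := Fintype.ofFinite ι
  classical
  have h := hL x
  rw [← Nat.card_coe_set_eq, Nat.card_eq_fintype_card] at h
  exact Function.Embedding.nonempty_of_card_le (by simpa using h)

end LocalRealizer

namespace IncPoset

def vertex {n : ℕ} (v : Fin n) : IncPoset n :=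
  Sum.inl v

def edge {n : ℕ} {x z : Fin n} (h : x ≠ z) : IncPoset n :=
  Sum.inr ⟨{x, z}, card_pair h⟩

lemma vertex_le_edge {n : ℕ} {v x z : Fin n} (h : x ≠ z) :
    vertex v ≤ edge h ↔ v = x ∨ v = z := by
  have : vertex v ≤ edge h ↔ v ∈ ({x, z} : Finset (Fin n)) := Iff.rfl
  simpa using this

theorem exists_forall_not_widthAtMost (d : ℕ) :
    ∃ N, ∀ n, N ≤ n → ∀ {t : ℕ} (L : Fin t → PLE ((· ≤ ·) : IncPoset n → IncPoset n → Prop)),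
      IsLocalRealizer L → ¬ WidthAtMost L d := by
  classical
  obtain ⟨N, hN⟩ := exists_monochromatic_quadruple (Option (Fin d × Fin d))
  refine ⟨N, fun n hn t L hL hw => ?_⟩
  have hrev : ∀ x y z : Fin n, (hxy : x < y) → (hyz : y < z) →
      ∃ i, (L i).rel (edge (hxy.trans hyz).ne) (vertex y) := fun x y z hxy hyz =>
    hL.exists_rel_of_not_le <| by
      rw [vertex_le_edge]
      rintro (rfl | rfl)
      exacts [hxy.false, hyz.false]
  choose idx hidx using hrev
  have lab u := (hw.nonempty_embedding u).some
  let col : Fin n → Fin n → Fin n → Option (Fin d × Fin d) := fun x y z =>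
    if h : x < y ∧ y < z then
      some (lab (vertex y) ⟨idx x y z h.1 h.2, (L _).mem_right _ _ (hidx x y z h.1 h.2)⟩,
        lab (edge (h.1.trans h.2).ne) ⟨idx x y z h.1 h.2, (L _).mem_left _ _ (hidx x y z h.1 h.2)⟩)
    else none
  obtain ⟨a, b, c, e, hab, hbc, hce, h₁, h₂, h₃⟩ := hN (by simpa using hn) col
  simp only [col, dif_pos (And.intro hab hbc), dif_pos (And.intro hab (hbc.trans hce)),
    dif_pos (And.intro (hab.trans hbc) hce), dif_pos (And.intro hbc hce), Option.some.injEq,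
    Prod.mk.injEq, EmbeddingLike.apply_eq_iff_eq, Subtype.mk.injEq] at h₁ h₂ h₃
  have hi : idx a b c hab hbc = idx b c e hbc hce := h₁.1.trans (h₂.2.trans h₃.1)
  have hac := hidx a b c hab hbc
  have hbe := hidx b c e hbc hce
  rw [← hi] at hbe
  exact hbc.ne (Sum.inl.inj ((L _).eq_of_rel_of_rel_of_le hac hbe
    ((vertex_le_edge _).2 (Or.inr rfl)) ((vertex_le_edge _).2 (Or.inl rfl))))

end IncPoset

section LocalDimension

variable {X : Type*}

def PLE.reversal {le : X → X → Prop} {a b : X} (h : ¬ le a b) : PLE le where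
  dom := {a, b}
  rel x y := x = y ∧ (x = a ∨ x = b) ∨ x = b ∧ y = a
  mem_left := by grind
  mem_right := by grind
  refl x hx := Or.inl ⟨rfl, hx⟩
  antisymm := by grind
  trans := by grind
  total := by grind
  le_imp := by grind

variable [PartialOrder X]

lemma exists_isLocalRealizer [Finite X] :
    ∃ (t : ℕ) (L : Fin t → PLE ((· ≤ ·) : X → X → Prop)), IsLocalRealizer L := by
  obtain ⟨t, ⟨e⟩⟩ := Finite.exists_equiv_fin {p : X × X // ¬ p.1 ≤ p.2}
  refine ⟨t, fun i => PLE.reversal (e.symm i).2, fun x y => ⟨?_, fun h => ?_⟩⟩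
  · rintro hxy i ⟨(⟨rfl, -⟩ | ⟨rfl, rfl⟩), hyx⟩
    exacts [hyx rfl, (e.symm i).2 hxy]
  · by_contra hxy
    refine h (e ⟨(x, y), hxy⟩) ⟨Or.inr ?_, fun hyx => hxy (hyx ▸ le_rfl)⟩
    simp

lemma lt_localDim_of_forall_not_widthAtMost [Finite X] {d : ℕ}
    (h : ∀ {t : ℕ} (L : Fin t → PLE ((· ≤ ·) : X → X → Prop)),
      IsLocalRealizer L → ¬ WidthAtMost L d) :
    d < localDim X := by
  obtain ⟨t, L, hL⟩ := exists_isLocalRealizer (X := X)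
  have hne : {d | ∃ (t : ℕ) (L : Fin t → PLE ((· ≤ ·) : X → X → Prop)),
      IsLocalRealizer L ∧ WidthAtMost L d}.Nonempty :=
    ⟨t, t, L, hL, fun x => (Set.ncard_le_card _).trans (by simp)⟩
  refine lt_of_not_ge fun hle => ?_
  obtain ⟨t', L', hL', hw⟩ := Nat.sInf_mem hne
  exact h L' hL' fun x => (hw x).trans hle

end LocalDimension

/-- For every `d` there exists `n₀` such that for all `n ≥ n₀`, the
incidence poset `P_n` of the complete graph on `n` vertices has local dimension
greater than `d`; i.e. the local dimension of `P_n` tends to infinity. -/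
theorem local_dim_incidence_poset_unbounded (d : ℕ) :
    ∃ n₀ : ℕ, ∀ n : ℕ, n₀ ≤ n → d < localDim (IncPoset n) := by
  obtain ⟨n₀, hn₀⟩ := IncPoset.exists_forall_not_widthAtMost d
  exact ⟨n₀, fun n hn => lt_localDim_of_forall_not_widthAtMost (hn₀ n hn)⟩
end
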